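/- arXiv:2302.13588 — 9 statements merged into one kernel-verified Lean document; each statement's English description precedes it below -/
import Mathlib

section
/- Let P = k[x₁,…,x_n] and Q = k[y₁,…,y_n] be polynomial rings, each equipped with a Poisson bracket. If the modular derivation of P is identically zero (P is unimodular) while the modular derivation of Q is not identically zero (Q is non-unimodular), then P and Q are not isomorphic as Poisson algebras. -/
/-!
The modular derivation of a Poisson bracket sends `f` to the divergence `Σᵢ ∂ᵢ H(xᵢ)` of the
derivation `H = {·, f}`, and a Poisson isomorphism `e` turns `{·, f}` into its conjugate
`e ∘ H ∘ e⁻¹` for `{·, e f}`. So it suffices that conjugation by a polynomial automorphism `φ`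
commutes with divergence. Writing a derivation in the frame `Eₗ = φ ∘ ∂ₗ ∘ φ⁻¹`, this reduces to
`div Eₗ = 0`, which is `tr (M · Eₗ M⁻¹) = 0` for the Jacobian matrix `M` of `φ`. By Jacobi's
formula that trace is `-Eₗ(det M) / det M`, and it vanishes because `det M` is a unit of the
polynomial ring, hence a constant.
-/

open MvPolynomial

/-- A Poisson bracket on a commutative `k`-algebra: a `k`-bilinear antisymmetric operation
satisfying the Jacobi identity and the Leibniz rule. -/
structure PoissonStructure (k : Type*) [CommRing k] (A : Type*) [CommRing A] [Algebra k A] where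
  bracket : A → A → A
  add_right : ∀ a b c, bracket a (b + c) = bracket a b + bracket a c
  smul_right : ∀ (r : k) (a b : A), bracket a (r • b) = r • bracket a b
  antisymm : ∀ a b, bracket a b = -bracket b a
  jacobi : ∀ a b c,
    bracket a (bracket b c) + bracket b (bracket c a) + bracket c (bracket a b) = 0
  leibniz : ∀ a b c, bracket a (b * c) = bracket a b * c + b * bracket a c

namespace Derivation

section Conj

variable {R A B : Type*} [CommRing R] [CommRing A] [CommRing B] [Algebra R A] [Algebra R B]

def conj (φ : A ≃ₐ[R] B) (D : Derivation R A A) : Derivation R B B :=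
  Derivation.mk' (φ.toLinearMap ∘ₗ D.toLinearMap ∘ₗ φ.symm.toLinearMap) fun a b => by
    simp [smul_eq_mul]

@[simp]
theorem conj_apply (φ : A ≃ₐ[R] B) (D : Derivation R A A) (b : B) :
    D.conj φ b = φ (D (φ.symm b)) :=
  rfl

end Conj

theorem sum_apply {R A M : Type*} [CommSemiring R] [CommSemiring A] [Algebra R A]
    [AddCommMonoid M] [Module A M] [Module R M] {ι : Type*} (s : Finset ι)
    (D : ι → Derivation R A M) (a : A) : (∑ i ∈ s, D i) a = ∑ i ∈ s, D i a := by
  rw [← coeFnAddMonoidHom_apply, map_sum, Finset.sum_apply]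
  rfl

theorem leibniz_prod {R A : Type*} [CommRing R] [CommRing A] [Algebra R A]
    (E : Derivation R A A) {ι : Type*} [DecidableEq ι] (s : Finset ι) (f : ι → A) :
    E (∏ i ∈ s, f i) = ∑ i ∈ s, (∏ j ∈ s.erase i, f j) * E (f i) := by
  induction s using Finset.induction_on with
  | empty => simp
  | @insert a s ha ih =>
    rw [Finset.prod_insert ha, E.leibniz, smul_eq_mul, smul_eq_mul, ih, Finset.sum_insert ha,
      Finset.erase_insert ha, Finset.mul_sum, add_comm]
    congr 1
    refine Finset.sum_congr rfl fun i hi => ?_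
    rw [Finset.erase_insert_of_ne (ne_of_mem_of_not_mem hi ha).symm,
      Finset.prod_insert fun h => ha (Finset.mem_of_mem_erase h)]
    ring

section Matrix

variable {R A : Type*} [CommRing R] [CommRing A] [Algebra R A] (E : Derivation R A A)
  {n : Type*} [Fintype n]

theorem map_matrix_mul (M N : Matrix n n A) :
    (M * N).map E = M.map E * N + M * N.map E := by
  ext i j
  simp only [Matrix.map_apply, Matrix.mul_apply, Matrix.add_apply, map_sum, leibniz, smul_eq_mul,
    ← Finset.sum_add_distrib]
  exact Finset.sum_congr rfl fun _ _ => by ring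

variable [DecidableEq n]

theorem map_det_eq_sum_det_updateCol (M : Matrix n n A) :
    E M.det = ∑ r, (M.updateCol r fun i => E (M i r)).det := by
  simp only [Matrix.det_apply, map_sum, Units.smul_def, map_zsmul, leibniz_prod, Finset.smul_sum]
  rw [Finset.sum_comm]
  refine Finset.sum_congr rfl fun r _ => Finset.sum_congr rfl fun σ _ => ?_
  congr 1
  rw [← Finset.mul_prod_erase _ _ (Finset.mem_univ r), mul_comm]
  simp only [Matrix.updateCol_self]
  congr 1
  refine Finset.prod_congr rfl fun i hi => ?_
  rw [Matrix.updateCol_ne (Finset.ne_of_mem_erase hi)]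

/-- **Jacobi's formula** for a derivation. -/
theorem map_det (M : Matrix n n A) : E M.det = (M.adjugate * M.map E).trace := by
  rw [map_det_eq_sum_det_updateCol]
  refine Finset.sum_congr rfl fun r _ => ?_
  rw [← Matrix.cramer_apply, Matrix.cramer_eq_adjugate_mulVec]
  rfl

theorem trace_mul_map_eq_zero_of_mul_eq_one {M N : Matrix n n A} (hMN : M * N = 1)
    (hE : E M.det = 0) : (M * N.map E).trace = 0 := by
  have hdet : IsUnit M.det :=
    IsUnit.of_mul_eq_one N.det (by rw [← Matrix.det_mul, hMN, Matrix.det_one])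
  have hadj : M.adjugate = M.det • N := by
    rw [← Matrix.one_mul M.adjugate, ← mul_eq_one_comm.mp hMN, Matrix.mul_assoc,
      Matrix.mul_adjugate, Matrix.mul_smul, Matrix.mul_one]
  have hNM : (N * M.map E).trace = 0 := by
    rw [map_det, hadj, Matrix.smul_mul, Matrix.trace_smul, smul_eq_mul] at hE
    exact hdet.mul_right_eq_zero.mp hE
  have hsum : (M.map E * N + M * N.map E).trace = 0 := by
    rw [← map_matrix_mul, hMN]
    simp [Matrix.trace]
  rwa [Matrix.trace_add, Matrix.trace_mul_comm, hNM, zero_add] at hsum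

end Matrix

end Derivation

namespace MvPolynomial

variable {R σ : Type*} [CommRing R]

theorem pderiv_comm (i j : σ) (f : MvPolynomial σ R) :
    pderiv i (pderiv j f) = pderiv j (pderiv i f) := by
  classical
  have h : ⁅(pderiv i : Derivation R (MvPolynomial σ R) (MvPolynomial σ R)), pderiv j⁆ = 0 :=
    derivation_ext fun l => by
      rw [Derivation.commutator_apply]
      simp [pderiv_X, Pi.single_apply, apply_ite]
  simpa [Derivation.commutator_apply, sub_eq_zero] using congrArg (· f) h

theorem conj_pderiv_comm (φ : MvPolynomial σ R ≃ₐ[R] MvPolynomial σ R) (a l : σ)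
    (b : MvPolynomial σ R) :
    (pderiv a).conj φ ((pderiv l).conj φ b) = (pderiv l).conj φ ((pderiv a).conj φ b) := by
  simp [pderiv_comm a l]

variable [Fintype σ]

theorem derivation_apply_eq_sum (D : Derivation R (MvPolynomial σ R) (MvPolynomial σ R))
    (a : MvPolynomial σ R) :
    D a = ∑ i, D (X i) * pderiv i a := by
  classical
  have h : D = ∑ i, D (X i) • pderiv i := derivation_ext fun j => by
    simp [Derivation.sum_apply, pderiv_X, Pi.single_apply]
  conv_lhs => rw [h]
  simp [Derivation.sum_apply]

noncomputable def divergence :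
    Derivation R (MvPolynomial σ R) (MvPolynomial σ R) →ₗ[R] MvPolynomial σ R where
  toFun D := ∑ i, pderiv i (D (X i))
  map_add' D₁ D₂ := by simp [Finset.sum_add_distrib]
  map_smul' r D := by simp [Finset.smul_sum]

theorem divergence_apply (D : Derivation R (MvPolynomial σ R) (MvPolynomial σ R)) :
    divergence D = ∑ i, pderiv i (D (X i)) :=
  rfl

theorem divergence_smul (a : MvPolynomial σ R)
    (D : Derivation R (MvPolynomial σ R) (MvPolynomial σ R)) :
    divergence (a • D) = a * divergence D + D a := by
  simp only [divergence_apply, Derivation.smul_apply, smul_eq_mul, Derivation.leibniz,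
    Finset.sum_add_distrib, Finset.mul_sum, derivation_apply_eq_sum D a]

variable (φ : MvPolynomial σ R ≃ₐ[R] MvPolynomial σ R)

theorem derivation_apply_algEquiv (D : Derivation R (MvPolynomial σ R) (MvPolynomial σ R))
    (a : MvPolynomial σ R) : D (φ a) = ∑ j, D (φ (X j)) * φ (pderiv j a) := by
  have h := derivation_apply_eq_sum (D.conj φ.symm) a
  simp only [Derivation.conj_apply, AlgEquiv.symm_symm] at h
  simpa using congrArg φ h

theorem pderiv_eq_sum_conj_pderiv (i : σ) (b : MvPolynomial σ R) :
    pderiv i b = ∑ a, pderiv i (φ (X a)) * (pderiv a).conj φ b := by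
  simpa using derivation_apply_algEquiv φ (pderiv i) (φ.symm b)

theorem divergence_conj_pderiv [IsReduced R] (l : σ) :
    divergence ((pderiv l).conj φ) = 0 := by
  classical
  set E : σ → Derivation R (MvPolynomial σ R) (MvPolynomial σ R) := fun a => (pderiv a).conj φ
  set M : Matrix σ σ (MvPolynomial σ R) := Matrix.of fun i j => pderiv i (φ (X j))
  set N : Matrix σ σ (MvPolynomial σ R) := Matrix.of fun j r => E j (X r)
  have hMN : M * N = 1 := by
    refine Matrix.ext fun i r => ?_
    simp only [Matrix.mul_apply, M, N, E, Matrix.of_apply]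
    rw [← pderiv_eq_sum_conj_pderiv, pderiv_X, Pi.single_apply, Matrix.one_apply]
    exact if_congr eq_comm rfl rfl
  have hdet : E l M.det = 0 := by
    -- over a reduced ring the only units of the polynomial ring are constants
    have hunit : IsUnit M.det :=
      IsUnit.of_mul_eq_one N.det (by rw [← Matrix.det_mul, hMN, Matrix.det_one])
    obtain ⟨c, -, hc⟩ := (isUnit_iff_eq_C_of_isReduced).mp hunit
    rw [hc, ← algebraMap_eq, Derivation.map_algebraMap]
  calc divergence (E l) = ∑ i, pderiv i (N l i) := rfl
    _ = ∑ i, ∑ a, M i a * E l (N a i) := by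
      refine Finset.sum_congr rfl fun i _ => ?_
      rw [pderiv_eq_sum_conj_pderiv φ]
      exact Finset.sum_congr rfl fun a _ => congrArg _ (conj_pderiv_comm φ a l (X i))
    _ = (M * N.map (E l)).trace := by simp [Matrix.trace, Matrix.mul_apply]
    _ = 0 := (E l).trace_mul_map_eq_zero_of_mul_eq_one hMN hdet

theorem divergence_conj [IsReduced R]
    (D : Derivation R (MvPolynomial σ R) (MvPolynomial σ R)) :
    divergence (D.conj φ) = φ (divergence D) := by
  have h : D.conj φ = ∑ l, φ (D (X l)) • (pderiv l).conj φ := Derivation.ext fun b => by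
    rw [Derivation.conj_apply, derivation_apply_eq_sum D, Derivation.sum_apply]
    simp
  rw [h, map_sum]
  simp only [divergence_smul, divergence_conj_pderiv, mul_zero, zero_add]
  simp [divergence_apply]

end MvPolynomial

namespace PoissonStructure

variable {k A : Type*} [CommRing k] [CommRing A] [Algebra k A] (P : PoissonStructure k A)

theorem add_left (a b c : A) : P.bracket (a + b) c = P.bracket a c + P.bracket b c := by
  rw [P.antisymm, P.add_right, neg_add, ← P.antisymm, ← P.antisymm]

theorem smul_left (r : k) (a b : A) : P.bracket (r • a) b = r • P.bracket a b := by
  rw [P.antisymm, P.smul_right, ← smul_neg, ← P.antisymm]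

theorem leibniz_left (a b c : A) :
    P.bracket (a * b) c = a * P.bracket b c + b * P.bracket a c := by
  rw [P.antisymm, P.leibniz, P.antisymm c a, P.antisymm c b]
  ring

def hamiltonianDerivation (f : A) : Derivation k A A :=
  Derivation.mk'
    { toFun a := P.bracket a f
      map_add' a b := P.add_left a b f
      map_smul' r a := P.smul_left r a f }
    fun a b => P.leibniz_left a b f

@[simp]
theorem hamiltonianDerivation_apply (f a : A) : P.hamiltonianDerivation f a = P.bracket a f :=
  rfl

theorem conj_hamiltonianDerivation {B : Type*} [CommRing B] [Algebra k B]
    (Q : PoissonStructure k B) (e : A ≃ₐ[k] B)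
    (he : ∀ f g, e (P.bracket f g) = Q.bracket (e f) (e g)) (f : A) :
    (P.hamiltonianDerivation f).conj e = Q.hamiltonianDerivation (e f) :=
  Derivation.ext fun b => by simp [he]

end PoissonStructure

theorem stmt_1_general {k : Type*} [Field k] (n : ℕ)
    (P Q : PoissonStructure k (MvPolynomial (Fin n) k))
    (hP : ∀ f, ∑ i, pderiv i (P.bracket (X i) f) = 0)
    (hQ : ∃ f, ∑ i, pderiv i (Q.bracket (X i) f) ≠ 0) :
    ¬ ∃ e : MvPolynomial (Fin n) k ≃ₐ[k] MvPolynomial (Fin n) k,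
        ∀ f g, e (P.bracket f g) = Q.bracket (e f) (e g) := by
  rintro ⟨e, he⟩
  obtain ⟨g, hg⟩ := hQ
  have h := divergence_conj e (P.hamiltonianDerivation (e.symm g))
  rw [P.conj_hamiltonianDerivation Q e he, e.apply_symm_apply] at h
  exact hg (by simpa [divergence_apply, hP] using h)

/-- If the modular derivation `f ↦ Σᵢ ∂{zᵢ,f}/∂zᵢ` of `P` is identically zero while that of
`Q` is not, then `P` and `Q` are not isomorphic as Poisson algebras. -/
theorem stmt_1 {k : Type*} [Field k] [IsAlgClosed k] [CharZero k] (n : ℕ)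
    (P Q : PoissonStructure k (MvPolynomial (Fin n) k))
    (hP : ∀ f, ∑ i, pderiv i (P.bracket (X i) f) = 0)
    (hQ : ∃ f, ∑ i, pderiv i (Q.bracket (X i) f) ≠ 0) :
    ¬ ∃ e : MvPolynomial (Fin n) k ≃ₐ[k] MvPolynomial (Fin n) k,
        ∀ f g, e (P.bracket f g) = Q.bracket (e f) (e g) :=
  stmt_1_general n P Q hP hQ
end

section
/- Let P = k[x₁,x₂,x₃] be a quadratic Poisson algebra, i.e. {xᵢ,xⱼ} is homogeneous of degree 2 for all i,j. Let Q = k[y₁,y₂,y₃] be a Poisson algebra such that: (1) there exists a pair (i,j) with {yᵢ,yⱼ} = f(y₁,y₂) − r·y₃ for some polynomial f ∈ k[y₁,y₂] which is homogeneous with respect to the grading deg y₁ = deg y₂ = 1, and some nonzero scalar r ∈ k; and (2) for every other pair (k,l) with k < l and (k,l) ≠ (i,j), (k,l) ≠ (j,i), the bracket {y_k,y_l} is a scalar multiple of a single monomial in y₁, y₂, y₃. Then P is not isomorphic to Q as a Poisson algebra. -/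
/-!
A bracket whose values on generators lie in an ideal `I` has all its values in `I`, since it is
a biderivation. For a quadratic bracket on `k[x₁,x₂,x₃]` this puts every bracket in `𝔪₀²`,
where `𝔪₀` is the ideal of the origin. A Poisson isomorphism `e` carries `𝔪₀` to the ideal
`𝔪ₓ` of the point `x` with `xᵢ = (e⁻¹ yᵢ)(0)`, so every bracket of `Q` would lie in `𝔪ₓ²`,
and hence have all first partial derivatives vanishing at `x`.
But `∂/∂y₃ (f(y₁,y₂) − r y₃) = −r ≠ 0`.
-/

open MvPolynomial

namespace PoissonStructure

variable {k A : Type*} [CommRing k] [CommRing A] [Algebra k A]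

theorem bracket_one (S : PoissonStructure k A) (a : A) : S.bracket a 1 = 0 := by
  simpa using S.leibniz a 1 1

theorem bracket_algebraMap (S : PoissonStructure k A) (a : A) (c : k) :
    S.bracket a (algebraMap k A c) = 0 := by
  rw [Algebra.algebraMap_eq_smul_one, S.smul_right, S.bracket_one, smul_zero]

variable {σ : Type*}

theorem bracket_mem_of_bracket_X_right_mem (S : PoissonStructure k (MvPolynomial σ k))
    {I : Ideal (MvPolynomial σ k)} {a : MvPolynomial σ k} (h : ∀ j, S.bracket a (X j) ∈ I)
    (g : MvPolynomial σ k) : S.bracket a g ∈ I := by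
  induction g using MvPolynomial.induction_on with
  | C c => rw [← algebraMap_eq, S.bracket_algebraMap]; exact I.zero_mem
  | add p q hp hq => rw [S.add_right]; exact I.add_mem hp hq
  | mul_X p j hp =>
    rw [S.leibniz]
    exact I.add_mem (I.mul_mem_right _ hp) (I.mul_mem_left _ (h j))

theorem bracket_mem_of_bracket_X_X_mem (S : PoissonStructure k (MvPolynomial σ k))
    {I : Ideal (MvPolynomial σ k)} (h : ∀ i j, S.bracket (X i) (X j) ∈ I)
    (f g : MvPolynomial σ k) : S.bracket f g ∈ I := by
  refine S.bracket_mem_of_bracket_X_right_mem (fun j => ?_) g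
  rw [S.antisymm]
  exact I.neg_mem (S.bracket_mem_of_bracket_X_right_mem (h j) f)

end PoissonStructure

namespace MvPolynomial

variable {R σ τ : Type*} [CommRing R]

theorem monomial_mem_ker_eval_zero_pow_degree (m : σ →₀ ℕ) (a : R) :
    monomial m a ∈ RingHom.ker (eval (0 : σ → R)) ^ m.degree := by
  rw [monomial_eq, Finsupp.prod, Finsupp.degree_apply, ← Finset.prod_pow_eq_pow_sum]
  refine Ideal.mul_mem_left _ _ (Ideal.prod_mem_prod fun i _ => Ideal.pow_mem_pow ?_ _)
  simp

theorem IsHomogeneous.mem_ker_eval_zero_pow {p : MvPolynomial σ R} {n : ℕ}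
    (hp : p.IsHomogeneous n) : p ∈ RingHom.ker (eval (0 : σ → R)) ^ n := by
  rw [p.as_sum]
  refine Ideal.sum_mem _ fun m hm => ?_
  have hdeg : m.degree = n := by
    rw [Finsupp.degree_eq_weight_one]
    exact hp (mem_support_iff.mp hm)
  exact hdeg ▸ monomial_mem_ker_eval_zero_pow_degree m _

theorem eval_pderiv_eq_zero_of_mem_ker_eval_sq {x : σ → R} {g : MvPolynomial σ R}
    (hg : g ∈ RingHom.ker (eval x) ^ 2) (t : σ) : eval x (pderiv t g) = 0 := by
  rw [sq] at hg
  refine Submodule.mul_induction_on hg (fun a ha b hb => ?_) (fun a b ha hb => ?_)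
  · rw [RingHom.mem_ker] at ha hb
    simp [ha, hb]
  · rw [map_add, map_add, ha, hb, add_zero]

theorem map_ker_eval_algEquiv (e : MvPolynomial σ R ≃ₐ[R] MvPolynomial τ R) (y : σ → R) :
    (RingHom.ker (eval y)).map e = RingHom.ker (eval fun i => eval y (e.symm (X i))) := by
  have heval (f : MvPolynomial τ R) :
      eval (fun i => eval y (e.symm (X i))) f = eval y (e.symm f) := by
    simpa [coe_aeval_eq_eval, Function.comp_def] using
      congr($(aeval_unique ((aeval y).comp e.symm.toAlgHom)) f).symm
  ext f
  rw [Ideal.mem_map_of_equiv, RingHom.mem_ker, heval]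
  constructor
  · rintro ⟨g, hg, rfl⟩
    simpa using hg
  · exact fun hf => ⟨e.symm f, hf, e.apply_symm_apply f⟩

end MvPolynomial

theorem stmt_2_general {k : Type*} [Field k]
    (P Q : PoissonStructure k (MvPolynomial (Fin 3) k))
    (hP : ∀ i j, (P.bracket (X i) (X j)).IsHomogeneous 2)
    (hQ : ∃ i j : Fin 3, i ≠ j ∧
      (∃ (F : MvPolynomial (Fin 3) k) (r : k) (d : ℕ), r ≠ 0 ∧
        (∀ m ∈ F.support, m 2 = 0) ∧ F.IsHomogeneous d ∧
        Q.bracket (X i) (X j) = F - C r * X 2) ∧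
      (∀ a b : Fin 3, a < b → (a, b) ≠ (i, j) → (a, b) ≠ (j, i) →
        ∃ (s : k) (m : Fin 3 →₀ ℕ), Q.bracket (X a) (X b) = monomial m s)) :
    ¬ ∃ e : MvPolynomial (Fin 3) k ≃ₐ[k] MvPolynomial (Fin 3) k,
        ∀ f g, e (P.bracket f g) = Q.bracket (e f) (e g) := by
  rintro ⟨e, he⟩
  obtain ⟨i, j, -, ⟨F, r, -, hr, hF, -, hbr⟩, -⟩ := hQ
  have hPsq : ∀ f g, P.bracket f g ∈ RingHom.ker (eval (0 : Fin 3 → k)) ^ 2 :=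
    P.bracket_mem_of_bracket_X_X_mem fun a b => (hP a b).mem_ker_eval_zero_pow
  have hQsq : Q.bracket (X i) (X j) ∈
      RingHom.ker (eval fun t => eval 0 (e.symm (X t))) ^ 2 := by
    rw [← map_ker_eval_algEquiv, ← Ideal.map_pow, ← e.apply_symm_apply (X i),
      ← e.apply_symm_apply (X j), ← he]
    exact Ideal.mem_map_of_mem e (hPsq _ _)
  have hF2 : pderiv 2 F = 0 := by
    refine pderiv_eq_zero_of_notMem_vars fun h2 => ?_
    obtain ⟨m, hm, h2m⟩ := (mem_vars_iff_mem_support 2).mp h2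
    exact Finsupp.mem_support_iff.mp h2m (hF m hm)
  have h := eval_pderiv_eq_zero_of_mem_ker_eval_sq hQsq 2
  rw [hbr, map_sub, hF2, pderiv_C_mul, pderiv_X_self, mul_one, zero_sub, map_neg, eval_C,
    neg_eq_zero] at h
  exact hr h

/-- A quadratic Poisson algebra `P = k[x₁,x₂,x₃]` is not isomorphic, as a Poisson algebra,
to a Poisson algebra `Q = k[y₁,y₂,y₃]` in which some bracket `{yᵢ,yⱼ}` equals
`f(y₁,y₂) − r·y₃` with `f` homogeneous in `y₁,y₂` and `r ≠ 0`, while every other bracket of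
generators is a scalar multiple of a single monomial. -/
theorem stmt_2 {k : Type*} [Field k] [IsAlgClosed k] [CharZero k]
    (P Q : PoissonStructure k (MvPolynomial (Fin 3) k))
    (hP : ∀ i j, (P.bracket (X i) (X j)).IsHomogeneous 2)
    (hQ : ∃ i j : Fin 3, i ≠ j ∧
      (∃ (F : MvPolynomial (Fin 3) k) (r : k) (d : ℕ), r ≠ 0 ∧
        (∀ m ∈ F.support, m 2 = 0) ∧ F.IsHomogeneous d ∧
        Q.bracket (X i) (X j) = F - C r * X 2) ∧
      (∀ a b : Fin 3, a < b → (a, b) ≠ (i, j) → (a, b) ≠ (j, i) →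
        ∃ (s : k) (m : Fin 3 →₀ ℕ), Q.bracket (X a) (X b) = monomial m s)) :
    ¬ ∃ e : MvPolynomial (Fin 3) k ≃ₐ[k] MvPolynomial (Fin 3) k,
        ∀ f g, e (P.bracket f g) = Q.bracket (e f) (e g) :=
  stmt_2_general P Q hP hQ
end

section
/- Equip P = k[x₁,x₂,x₃] with the Poisson bracket {x₁,x₂} = 0, {x₂,x₃} = 3x₁², {x₃,x₁} = 0. Then for an invertible matrix M = (a_{ij}): (i) φ_M is a graded Poisson automorphism of P if and only if a₁₂ = a₁₃ = 0 and a₁₁² = a₂₂a₃₃ − a₂₃a₃₂; (ii) φ_M is a Poisson reflection of P if and only if M = [[−1,0,0],[a,1,0],[d,0,1]] for some a, d ∈ k. -/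
open MvPolynomial

/-- The bracket on `k[x₁,x₂,x₃]` determined by the values `p12 = {x₁,x₂}`, `p23 = {x₂,x₃}`,
`p31 = {x₃,x₁}` via `{f,g} = Σ_{i<j} (∂f/∂xᵢ·∂g/∂xⱼ − ∂f/∂xⱼ·∂g/∂xᵢ)·{xᵢ,xⱼ}`. -/
noncomputable def jacBracket {k : Type*} [Field k] (p12 p23 p31 : MvPolynomial (Fin 3) k)
    (f g : MvPolynomial (Fin 3) k) : MvPolynomial (Fin 3) k :=
  (pderiv 0 f * pderiv 1 g - pderiv 1 f * pderiv 0 g) * p12 +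
    (pderiv 1 f * pderiv 2 g - pderiv 2 f * pderiv 1 g) * p23 +
    (pderiv 2 f * pderiv 0 g - pderiv 0 f * pderiv 2 g) * p31

/-- The graded algebra endomorphism `φ_M` of `k[x₁,x₂,x₃]` with `φ_M(xᵢ) = Σⱼ M i j · xⱼ`. -/
noncomputable def phiM {k : Type*} [Field k] (M : Matrix (Fin 3) (Fin 3) k) :
    MvPolynomial (Fin 3) k →ₐ[k] MvPolynomial (Fin 3) k :=
  aeval fun i => ∑ j, C (M i j) * X j

/-- `φ_M` is a graded Poisson automorphism (for invertible `M`) iff it preserves the bracket. -/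
def IsPoissonAut {k : Type*} [Field k]
    (br : MvPolynomial (Fin 3) k → MvPolynomial (Fin 3) k → MvPolynomial (Fin 3) k)
    (M : Matrix (Fin 3) (Fin 3) k) : Prop :=
  ∀ f g, phiM M (br f g) = br (phiM M f) (phiM M g)

/-- `φ_M` is a Poisson reflection: a graded Poisson automorphism of finite order whose
eigenvalues are `1, 1, ξ` for some root of unity `ξ ≠ 1`. -/
def IsPoissonReflection {k : Type*} [Field k]
    (br : MvPolynomial (Fin 3) k → MvPolynomial (Fin 3) k → MvPolynomial (Fin 3) k)
    (M : Matrix (Fin 3) (Fin 3) k) : Prop :=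
  IsPoissonAut br M ∧ (∃ n, 0 < n ∧ M ^ n = 1) ∧
    ∃ ξ : k, ξ ≠ 1 ∧ (∃ m, 0 < m ∧ ξ ^ m = 1) ∧
      M.charpoly = (Polynomial.X - 1) ^ 2 * (Polynomial.X - Polynomial.C ξ)

/-!
The bracket is a biderivation, so `φ_M` preserves it as soon as it does so on pairs of
generators; the only nontrivial pair is `{x₂,x₃} = 3x₁²`, and preserving it says
`(a₁₁x₁ + a₁₂x₂ + a₁₃x₃)² = (a₂₂a₃₃ − a₂₃a₃₂)x₁²`.

For a reflection, `M` is then block lower triangular with lower block `B`, and its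
characteristic polynomial `(X − a₁₁)(X² − tr B · X + a₁₁²)` equals `(X − 1)²(X − ξ)` with
`ξ ≠ 1`. This forces `a₁₁ = ξ = −1`, `tr B = 2` and `det B = 1`, so `B` is unipotent by
Cayley–Hamilton. In characteristic zero a unipotent matrix of finite order is the identity,
because `(1 + N)ⁿ = 1 + nN` when `N² = 0`.
-/

section Bracket

variable {k : Type*} [Field k] (p12 p23 p31 : MvPolynomial (Fin 3) k)

lemma jacBracket_C_left (a : k) (g : MvPolynomial (Fin 3) k) :
    jacBracket p12 p23 p31 (C a) g = 0 := by
  simp [jacBracket]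

lemma jacBracket_C_right (f : MvPolynomial (Fin 3) k) (a : k) :
    jacBracket p12 p23 p31 f (C a) = 0 := by
  simp [jacBracket]

lemma jacBracket_add_left (f₁ f₂ g : MvPolynomial (Fin 3) k) :
    jacBracket p12 p23 p31 (f₁ + f₂) g =
      jacBracket p12 p23 p31 f₁ g + jacBracket p12 p23 p31 f₂ g := by
  simp only [jacBracket, map_add]; ring

lemma jacBracket_add_right (f g₁ g₂ : MvPolynomial (Fin 3) k) :
    jacBracket p12 p23 p31 f (g₁ + g₂) =
      jacBracket p12 p23 p31 f g₁ + jacBracket p12 p23 p31 f g₂ := by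
  simp only [jacBracket, map_add]; ring

lemma jacBracket_mul_left (f₁ f₂ g : MvPolynomial (Fin 3) k) :
    jacBracket p12 p23 p31 (f₁ * f₂) g =
      jacBracket p12 p23 p31 f₁ g * f₂ + f₁ * jacBracket p12 p23 p31 f₂ g := by
  simp only [jacBracket, Derivation.leibniz, smul_eq_mul]; ring

lemma jacBracket_mul_right (f g₁ g₂ : MvPolynomial (Fin 3) k) :
    jacBracket p12 p23 p31 f (g₁ * g₂) =
      jacBracket p12 p23 p31 f g₁ * g₂ + g₁ * jacBracket p12 p23 p31 f g₂ := by
  simp only [jacBracket, Derivation.leibniz, smul_eq_mul]; ring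

lemma AlgHom.map_jacBracket_of_map_jacBracket_X
    (φ : MvPolynomial (Fin 3) k →ₐ[k] MvPolynomial (Fin 3) k)
    (h : ∀ i j, φ (jacBracket p12 p23 p31 (X i) (X j)) =
      jacBracket p12 p23 p31 (φ (X i)) (φ (X j)))
    (f g : MvPolynomial (Fin 3) k) :
    φ (jacBracket p12 p23 p31 f g) = jacBracket p12 p23 p31 (φ f) (φ g) := by
  have hX (i : Fin 3) (g : MvPolynomial (Fin 3) k) :
      φ (jacBracket p12 p23 p31 (X i) g) = jacBracket p12 p23 p31 (φ (X i)) (φ g) := by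
    induction g using MvPolynomial.induction_on with
    | C a => simp [jacBracket_C_right]
    | add p q hp hq => rw [jacBracket_add_right, map_add, hp, hq, map_add, jacBracket_add_right]
    | mul_X p j hp =>
      rw [jacBracket_mul_right, map_add, map_mul, map_mul, hp, h, map_mul, jacBracket_mul_right]
  induction f using MvPolynomial.induction_on with
  | C a => simp [jacBracket_C_left]
  | add p q hp hq => rw [jacBracket_add_left, map_add, hp, hq, map_add, jacBracket_add_left]
  | mul_X p i hp =>
    rw [jacBracket_mul_left, map_add, map_mul, map_mul, hp, hX, map_mul, jacBracket_mul_left]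

end Bracket

section PoissonAut

variable {k : Type*} [Field k]

lemma phiM_X (M : Matrix (Fin 3) (Fin 3) k) (i : Fin 3) :
    phiM M (X i) = C (M i 0) * X 0 + C (M i 1) * X 1 + C (M i 2) * X 2 := by
  simp [phiM, Fin.sum_univ_three]

lemma phiM_jacBracket_X_X (M : Matrix (Fin 3) (Fin 3) k) (h01 : M 0 1 = 0) (h02 : M 0 2 = 0)
    (h00 : M 0 0 ^ 2 = M 1 1 * M 2 2 - M 1 2 * M 2 1) (i j : Fin 3) :
    phiM M (jacBracket 0 (3 * X 0 ^ 2) 0 (X i) (X j)) =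
      jacBracket 0 (3 * X 0 ^ 2) 0 (phiM M (X i)) (phiM M (X j)) := by
  have h00' : (C (M 0 0) ^ 2 : MvPolynomial (Fin 3) k) =
      C (M 1 1) * C (M 2 2) - C (M 1 2) * C (M 2 1) := by
    simp only [← C_pow, ← C_mul, ← C_sub, h00]
  fin_cases i <;> fin_cases j <;>
    simp [jacBracket, phiM_X, pderiv_X, h01, h02, map_ofNat] <;>
    first
      | (left; ring)
      | linear_combination (3 * X 0 ^ 2 : MvPolynomial (Fin 3) k) * h00'
      | linear_combination (-(3 * X 0 ^ 2) : MvPolynomial (Fin 3) k) * h00'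

lemma isPoissonAut_jacBracket_of (M : Matrix (Fin 3) (Fin 3) k) (h01 : M 0 1 = 0)
    (h02 : M 0 2 = 0) (h00 : M 0 0 ^ 2 = M 1 1 * M 2 2 - M 1 2 * M 2 1) :
    IsPoissonAut (jacBracket 0 (3 * X 0 ^ 2) 0) M :=
  (phiM M).map_jacBracket_of_map_jacBracket_X _ _ _ (phiM_jacBracket_X_X M h01 h02 h00)

lemma isPoissonAut_jacBracket_iff [NeZero (3 : k)] (M : Matrix (Fin 3) (Fin 3) k) :
    IsPoissonAut (jacBracket 0 (3 * X 0 ^ 2) 0) M ↔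
      M 0 1 = 0 ∧ M 0 2 = 0 ∧ M 0 0 ^ 2 = M 1 1 * M 2 2 - M 1 2 * M 2 1 := by
  refine ⟨fun h => ?_, fun ⟨h01, h02, h00⟩ => isPoissonAut_jacBracket_of M h01 h02 h00⟩
  have key : (3 * (C (M 0 0) * X 0 + C (M 0 1) * X 1 + C (M 0 2) * X 2) ^ 2 :
      MvPolynomial (Fin 3) k) =
      (C (M 1 1) * C (M 2 2) - C (M 1 2) * C (M 2 1)) * (3 * X 0 ^ 2) := by
    simpa [jacBracket, phiM_X, pderiv_X, map_ofNat] using h (X 1) (X 2)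
  have h01 : M 0 1 = 0 := by simpa [three_ne_zero] using congrArg (eval ![0, 1, 0]) key
  have h02 : M 0 2 = 0 := by simpa [three_ne_zero] using congrArg (eval ![0, 0, 1]) key
  have h00 : 3 * M 0 0 ^ 2 = (M 1 1 * M 2 2 - M 1 2 * M 2 1) * 3 := by
    simpa using congrArg (eval ![1, 0, 0]) key
  exact ⟨h01, h02, mul_left_cancel₀ three_ne_zero (by linear_combination h00)⟩

end PoissonAut

section RowZero

variable {R : Type*} [CommRing R] {n : ℕ}

lemma Matrix.mul_apply_zero_succ_of_row_zero {M N : Matrix (Fin (n + 1)) (Fin (n + 1)) R}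
    (hM : ∀ j : Fin n, M 0 j.succ = 0) (hN : ∀ j : Fin n, N 0 j.succ = 0) (j : Fin n) :
    (M * N) 0 j.succ = 0 := by
  simp [Matrix.mul_apply, Fin.sum_univ_succ, hM, hN]

lemma Matrix.submatrix_succ_mul_of_row_zero (M : Matrix (Fin (n + 1)) (Fin (n + 1)) R)
    {N : Matrix (Fin (n + 1)) (Fin (n + 1)) R} (hN : ∀ j : Fin n, N 0 j.succ = 0) :
    (M * N).submatrix Fin.succ Fin.succ =
      M.submatrix Fin.succ Fin.succ * N.submatrix Fin.succ Fin.succ := by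
  ext i j
  simp [Matrix.mul_apply, Fin.sum_univ_succ (n := n), hN]

lemma Matrix.pow_apply_zero_succ_of_row_zero {M : Matrix (Fin (n + 1)) (Fin (n + 1)) R}
    (hM : ∀ j : Fin n, M 0 j.succ = 0) (p : ℕ) (j : Fin n) : (M ^ p) 0 j.succ = 0 := by
  induction p generalizing j with
  | zero => exact Matrix.one_apply_ne (Fin.succ_ne_zero j).symm
  | succ p ih => rw [pow_succ]; exact Matrix.mul_apply_zero_succ_of_row_zero ih hM j

lemma Matrix.submatrix_succ_pow_of_row_zero {M : Matrix (Fin (n + 1)) (Fin (n + 1)) R}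
    (hM : ∀ j : Fin n, M 0 j.succ = 0) (p : ℕ) :
    (M ^ p).submatrix Fin.succ Fin.succ = (M.submatrix Fin.succ Fin.succ) ^ p := by
  induction p with
  | zero => simp [Matrix.submatrix_one _ (Fin.succ_injective n)]
  | succ p ih => rw [pow_succ, Matrix.submatrix_succ_mul_of_row_zero _ hM, ih, pow_succ]

lemma Matrix.charpoly_of_row_zero {M : Matrix (Fin (n + 1)) (Fin (n + 1)) R}
    (hM : ∀ j : Fin n, M 0 j.succ = 0) :
    M.charpoly = (Polynomial.X - Polynomial.C (M 0 0)) *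
      (M.submatrix Fin.succ Fin.succ).charpoly := by
  have hsub : M.charmatrix.submatrix Fin.succ Fin.succ =
      (M.submatrix Fin.succ Fin.succ).charmatrix := by
    ext i j
    by_cases hij : i = j <;> simp [hij]
  have hrow (j : Fin n) : M.charmatrix 0 j.succ = 0 := by
    simp [Matrix.charmatrix_apply_ne _ _ _ (Fin.succ_ne_zero j).symm, hM]
  rw [Matrix.charpoly, Matrix.det_succ_row_zero, Fin.sum_univ_succ]
  simp [hrow, hsub, Matrix.charpoly]

end RowZero

section Unipotent

variable {A : Type*} [Ring A]

lemma pow_eq_one_add_natCast_mul_of_sub_one_sq_eq_zero {B : A} (hB : (B - 1) ^ 2 = 0) (p : ℕ) :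
    B ^ p = 1 + p * (B - 1) := by
  induction p with
  | zero => simp
  | succ p ih =>
    calc B ^ (p + 1) = (1 + p * (B - 1)) * (1 + (B - 1)) := by rw [pow_succ, ih, add_sub_cancel]
      _ = 1 + (p + 1) * (B - 1) + p * (B - 1) ^ 2 := by noncomm_ring
      _ = 1 + (p + 1 : ℕ) * (B - 1) := by rw [hB]; push_cast; simp

lemma eq_one_of_pow_eq_one_of_sub_one_sq_eq_zero [Module ℚ A] {B : A} (hB : (B - 1) ^ 2 = 0)
    {p : ℕ} (hp : p ≠ 0) (hBp : B ^ p = 1) : B = 1 := by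
  have h : (p : ℚ) • (B - 1) = 0 := by
    rw [Nat.cast_smul_eq_nsmul, nsmul_eq_mul]
    simpa [hBp] using pow_eq_one_add_natCast_mul_of_sub_one_sq_eq_zero hB p
  exact sub_eq_zero.mp ((smul_eq_zero.mp h).resolve_left (Nat.cast_ne_zero.mpr hp))

end Unipotent

lemma Matrix.sub_one_sq_eq_zero_of_trace_eq_two_of_det_eq_one {R : Type*} [CommRing R]
    [Nontrivial R] {B : Matrix (Fin 2) (Fin 2) R} (htr : B.trace = 2) (hdet : B.det = 1) :
    (B - 1) ^ 2 = 0 := by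
  have h := B.aeval_self_charpoly
  rw [Matrix.charpoly_fin_two, htr, hdet] at h
  simp only [map_add, map_sub, map_mul, map_pow, Polynomial.aeval_X, map_ofNat, map_one] at h
  rw [← h]
  noncomm_ring

lemma eq_neg_one_of_X_sub_one_sq_mul_X_sub_C_eq {k : Type*} [Field k] [NeZero (2 : k)]
    {a t ξ : k} (hξ : ξ ≠ 1)
    (h : (Polynomial.X - 1) ^ 2 * (Polynomial.X - Polynomial.C ξ) =
      (Polynomial.X - Polynomial.C a) * (Polynomial.X ^ 2 - Polynomial.C t * Polynomial.X +
        Polynomial.C (a ^ 2))) :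
    a = -1 ∧ ξ = -1 ∧ t = 2 := by
  have e0 := congrArg (Polynomial.eval 0) h
  have e1 := congrArg (Polynomial.eval 1) h
  have em := congrArg (Polynomial.eval (-1)) h
  simp only [Polynomial.eval_mul, Polynomial.eval_sub, Polynomial.eval_add, Polynomial.eval_pow,
    Polynomial.eval_X, Polynomial.eval_C, Polynomial.eval_one] at e0 e1 em
  -- `e0` says `ξ = a³`; eliminating `t` between `e1` and `em` leaves:
  have hfac : (a - 1) ^ 3 * (a + 1) = 0 := by
    refine (mul_eq_zero.mp ?_).resolve_left (two_ne_zero (α := k))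
    linear_combination (1 - a) * em - 4 * (1 - a) * e0 - (1 + a) * e1
  have ha : a = -1 := by
    rcases mul_eq_zero.mp hfac with h1 | h1
    · refine absurd ?_ hξ
      obtain rfl : a = 1 := sub_eq_zero.mp (pow_eq_zero_iff three_ne_zero |>.mp h1)
      linear_combination -e0
    · exact eq_neg_of_add_eq_zero_left h1
  subst ha
  have ht : 2 * (t - 2) = 0 := by linear_combination e1
  refine ⟨rfl, by linear_combination -e0, ?_⟩
  linear_combination (mul_eq_zero.mp ht).resolve_left two_ne_zero

lemma exists_eq_of_isPoissonReflection_jacBracket {k : Type*} [Field k] [CharZero k]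
    {M : Matrix (Fin 3) (Fin 3) k} (hM : IsPoissonReflection (jacBracket 0 (3 * X 0 ^ 2) 0) M) :
    ∃ a d : k, M = !![-1, 0, 0; a, 1, 0; d, 0, 1] := by
  obtain ⟨hAut, ⟨n, hn, hMn⟩, ξ, hξ, -, hcp⟩ := hM
  obtain ⟨h01, h02, h00⟩ := (isPoissonAut_jacBracket_iff M).mp hAut
  have hrow : ∀ j : Fin 2, M 0 j.succ = 0 := Fin.forall_fin_two.mpr ⟨h01, h02⟩
  set B := M.submatrix Fin.succ Fin.succ
  have hBdet : B.det = M 0 0 ^ 2 := by simp [B, Matrix.det_fin_two, h00]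
  rw [Matrix.charpoly_of_row_zero hrow, Matrix.charpoly_fin_two, hBdet] at hcp
  obtain ⟨ha, -, htr⟩ := eq_neg_one_of_X_sub_one_sq_mul_X_sub_C_eq hξ hcp.symm
  have hBn : B ^ n = 1 := by
    rw [← Matrix.submatrix_succ_pow_of_row_zero hrow, hMn,
      Matrix.submatrix_one _ (Fin.succ_injective 2)]
  have hB1 : B = 1 := eq_one_of_pow_eq_one_of_sub_one_sq_eq_zero
    (Matrix.sub_one_sq_eq_zero_of_trace_eq_two_of_det_eq_one htr (by simp [hBdet, ha]))
    hn.ne' hBn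
  have hBij (i j : Fin 2) : M i.succ j.succ = (1 : Matrix (Fin 2) (Fin 2) k) i j := by
    rw [← hB1]; rfl
  obtain ⟨h11, h12, h21, h22⟩ : M 1 1 = 1 ∧ M 1 2 = 0 ∧ M 2 1 = 0 ∧ M 2 2 = 1 :=
    ⟨hBij 0 0, hBij 0 1, hBij 1 0, hBij 1 1⟩
  refine ⟨M 1 0, M 2 0, ?_⟩
  ext i j
  fin_cases i <;> fin_cases j <;> simp [h01, h02, ha, h11, h12, h21, h22]

lemma isPoissonReflection_jacBracket_neg_one_one_one {k : Type*} [Field k] [NeZero (2 : k)]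
    (a d : k) :
    IsPoissonReflection (jacBracket 0 (3 * X 0 ^ 2) 0) !![-1, 0, 0; a, 1, 0; d, 0, 1] := by
  have hrow : ∀ j : Fin 2, !![-1, 0, 0; a, 1, 0; d, 0, 1] 0 j.succ = 0 :=
    Fin.forall_fin_two.mpr ⟨rfl, rfl⟩
  have hsub : (!![-1, 0, 0; a, 1, 0; d, 0, 1] : Matrix (Fin 3) (Fin 3) k).submatrix
      Fin.succ Fin.succ = 1 := by
    ext i j
    fin_cases i <;> fin_cases j <;> rfl
  have hξ : (-1 : k) ≠ 1 := by
    rw [ne_eq, neg_eq_iff_add_eq_zero, one_add_one_eq_two]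
    exact two_ne_zero
  refine ⟨isPoissonAut_jacBracket_of _ rfl rfl (by simp), ⟨2, two_pos, ?_⟩, -1, hξ,
    ⟨2, two_pos, by norm_num⟩, ?_⟩
  · ext i j
    fin_cases i <;> fin_cases j <;> simp [sq, Matrix.mul_apply, Fin.sum_univ_three]
  · rw [Matrix.charpoly_of_row_zero hrow, hsub, Matrix.charpoly_one]
    simp only [Matrix.of_apply, Matrix.cons_val', Matrix.cons_val_zero, Matrix.cons_val_fin_one,
      map_neg, map_one, sub_neg_eq_add, Fintype.card_fin]
    ring

theorem stmt_3_general {k : Type*} [Field k] [CharZero k]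
    (M : Matrix (Fin 3) (Fin 3) k) :
    (IsPoissonAut (jacBracket 0 (3 * X 0 ^ 2) 0) M ↔
      M 0 1 = 0 ∧ M 0 2 = 0 ∧ M 0 0 ^ 2 = M 1 1 * M 2 2 - M 1 2 * M 2 1) ∧
    (IsPoissonReflection (jacBracket 0 (3 * X 0 ^ 2) 0) M ↔
      ∃ a d : k, M = !![-1, 0, 0; a, 1, 0; d, 0, 1]) := by
  refine ⟨isPoissonAut_jacBracket_iff M, exists_eq_of_isPoissonReflection_jacBracket, ?_⟩
  rintro ⟨a, d, rfl⟩
  exact isPoissonReflection_jacBracket_neg_one_one_one a d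

/-- Case `{x₁,x₂} = 0`, `{x₂,x₃} = 3x₁²`, `{x₃,x₁} = 0`. -/
theorem stmt_3 {k : Type*} [Field k] [IsAlgClosed k] [CharZero k]
    (M : Matrix (Fin 3) (Fin 3) k) (hM : IsUnit M.det) :
    (IsPoissonAut (jacBracket 0 (3 * X 0 ^ 2) 0) M ↔
      M 0 1 = 0 ∧ M 0 2 = 0 ∧ M 0 0 ^ 2 = M 1 1 * M 2 2 - M 1 2 * M 2 1) ∧
    (IsPoissonReflection (jacBracket 0 (3 * X 0 ^ 2) 0) M ↔
      ∃ a d : k, M = !![-1, 0, 0; a, 1, 0; d, 0, 1]) :=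
  stmt_3_general M
end

section
/- Equip P = k[x₁,x₂,x₃] with the Poisson bracket {x₁,x₂} = 0, {x₂,x₃} = 2x₁x₂ + x₂², {x₃,x₁} = x₁² + 2x₁x₂. Then for an invertible matrix M = (a_{ij}): (i) φ_M is a graded Poisson automorphism of P if and only if M has one of the six forms [[0,a,0],[−a,−a,0],[b,c,a]], [[0,−a,0],[−a,0,0],[b,c,a]], [[−a,0,0],[a,a,0],[b,c,a]], [[−a,−a,0],[a,0,0],[b,c,a]], [[a,a,0],[0,−a,0],[b,c,a]], [[a,0,0],[0,a,0],[b,c,a]] with a ∈ k \ {0} and b, c ∈ k; (ii) φ_M is a Poisson reflection of P if and only if M has one of the three forms [[0,−1,0],[−1,0,0],[b,b,1]], [[−1,0,0],[1,1,0],[b,0,1]], [[1,1,0],[0,−1,0],[0,c,1]] with b, c ∈ k. -/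
open MvPolynomial

set_option maxHeartbeats 4000000 in
private lemma chainRule {k : Type*} [CommRing k] (v : Fin 3 → MvPolynomial (Fin 3) k)
    (i : Fin 3) (f : MvPolynomial (Fin 3) k) :
    pderiv i (aeval v f) = ∑ l, aeval v (pderiv l f) * pderiv i (v l) := by
  induction f using MvPolynomial.induction_on with
  | C a => simp [Fin.sum_univ_three]
  | add f g hf hg =>
    rw [map_add, map_add, Fin.sum_univ_three] at *
    simp only [map_add, hf, hg]; ring
  | mul_X f j hf =>
    rw [Fin.sum_univ_three] at *
    rw [map_mul, aeval_X, pderiv_mul, hf]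
    fin_cases j <;>
      simp [pderiv_mul, pderiv_X, Pi.single_apply, map_add, map_mul, aeval_X] <;> ring

set_option maxHeartbeats 4000000 in
private lemma aut_iff {k : Type*} [Field k] (p12 p23 p31 : MvPolynomial (Fin 3) k)
    (M : Matrix (Fin 3) (Fin 3) k) :
    IsPoissonAut (jacBracket p12 p23 p31) M ↔
      (phiM M p12 = jacBracket p12 p23 p31 (phiM M (X 0)) (phiM M (X 1)) ∧
       phiM M p23 = jacBracket p12 p23 p31 (phiM M (X 1)) (phiM M (X 2)) ∧
       phiM M p31 = jacBracket p12 p23 p31 (phiM M (X 2)) (phiM M (X 0))) := by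
  constructor
  · intro h
    have h01 := h (X 0) (X 1)
    have h12 := h (X 1) (X 2)
    have h20 := h (X 2) (X 0)
    rw [show jacBracket p12 p23 p31 (X 0) (X 1) = p12 by
      simp [jacBracket, pderiv_X, Pi.single_apply]] at h01
    rw [show jacBracket p12 p23 p31 (X 1) (X 2) = p23 by
      simp [jacBracket, pderiv_X, Pi.single_apply]] at h12
    rw [show jacBracket p12 p23 p31 (X 2) (X 0) = p31 by
      simp [jacBracket, pderiv_X, Pi.single_apply]] at h20
    exact ⟨h01, h12, h20⟩
  · rintro ⟨h1, h2, h3⟩ f g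
    set v : Fin 3 → MvPolynomial (Fin 3) k := fun i => ∑ j, C (M i j) * X j with hv
    simp only [phiM, ← hv, aeval_X, jacBracket] at h1 h2 h3 ⊢
    simp only [map_add, map_sub, map_mul, h1, h2, h3]
    simp only [chainRule v, Fin.sum_univ_three]
    ring

private lemma cp3 {k : Type*} [Field k] (A : Matrix (Fin 3) (Fin 3) k) :
    A.charpoly = Polynomial.X ^ 3 - Polynomial.C (A 0 0 + A 1 1 + A 2 2) * Polynomial.X ^ 2
      + Polynomial.C (A 0 0 * A 1 1 + A 0 0 * A 2 2 + A 1 1 * A 2 2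
          - A 0 1 * A 1 0 - A 0 2 * A 2 0 - A 1 2 * A 2 1) * Polynomial.X
      - Polynomial.C A.det := by
  rw [Matrix.charpoly, Matrix.det_fin_three, Matrix.det_fin_three]
  simp only [Matrix.charmatrix_apply, Matrix.diagonal_apply, Fin.reduceEq, reduceIte,
    if_true, if_false, map_add, map_mul, map_sub, map_neg]
  ring

private lemma shear_pow {k : Type*} [Field k] (u v : k) (n : ℕ) :
    (!![1,0,0;0,1,0;u,v,1] : Matrix (Fin 3) (Fin 3) k) ^ n
      = !![1,0,0;0,1,0;(n:k)*u,(n:k)*v,1] := by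
  induction n with
  | zero => simp [Matrix.one_fin_three]
  | succ n ih =>
    rw [pow_succ, ih, Matrix.mul_fin_three]
    push_cast
    ext i j
    fin_cases i <;> fin_cases j <;> simp <;> ring

private lemma cpeval {k : Type*} [Field k] {A : Matrix (Fin 3) (Fin 3) k} {ξ : k}
    (hcp : A.charpoly = (Polynomial.X - 1) ^ 2 * (Polynomial.X - Polynomial.C ξ)) (t : k) :
    t^3 - (A 0 0 + A 1 1 + A 2 2) * t^2
      + (A 0 0 * A 1 1 + A 0 0 * A 2 2 + A 1 1 * A 2 2
          - A 0 1 * A 1 0 - A 0 2 * A 2 0 - A 1 2 * A 2 1) * t - A.det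
      = (t - 1)^2 * (t - ξ) := by
  have e := congrArg (Polynomial.eval t) hcp
  rw [cp3] at e
  simpa using e

private lemma fam14_contra {k : Type*} [Field k] {A : Matrix (Fin 3) (Fin 3) k} {ξ : k}
    (hξ1 : ξ ≠ 1)
    (hcp : A.charpoly = (Polynomial.X - 1) ^ 2 * (Polynomial.X - Polynomial.C ξ))
    (htr : A 0 0 + A 1 1 + A 2 2 = 0)
    (hs : A 0 0 * A 1 1 + A 0 0 * A 2 2 + A 1 1 * A 2 2
          - A 0 1 * A 1 0 - A 0 2 * A 2 0 - A 1 2 * A 2 1 = 0) : False := by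
  have e1 := cpeval hcp 1
  have e0 := cpeval hcp 0
  rw [htr, hs] at e1 e0
  apply hξ1
  have hd : A.det = ξ := by linear_combination -e0
  rw [hd] at e1
  linear_combination -e1

private lemma fam6_contra {k : Type*} [Field k] [CharZero k] {A : Matrix (Fin 3) (Fin 3) k}
    {ξ a : k} (hξ1 : ξ ≠ 1)
    (hcp : A.charpoly = (Polynomial.X - 1) ^ 2 * (Polynomial.X - Polynomial.C ξ))
    (htr : A 0 0 + A 1 1 + A 2 2 = 3*a)
    (hs : A 0 0 * A 1 1 + A 0 0 * A 2 2 + A 1 1 * A 2 2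
          - A 0 1 * A 1 0 - A 0 2 * A 2 0 - A 1 2 * A 2 1 = 3*a^2)
    (hd : A.det = a^3) : False := by
  have e1 := cpeval hcp 1
  have e0 := cpeval hcp 0
  rw [htr, hs, hd] at e1 e0
  have hcube : (1 - a)^3 = 0 := by linear_combination e1
  have h := pow_eq_zero_iff (n := 3) (by norm_num) |>.mp hcube
  apply hξ1
  linear_combination e0 - (a^2 + a + 1) * h

private lemma fam235_a {k : Type*} [Field k] [CharZero k] {A : Matrix (Fin 3) (Fin 3) k}
    {ξ a : k} (hξ1 : ξ ≠ 1)
    (hcp : A.charpoly = (Polynomial.X - 1) ^ 2 * (Polynomial.X - Polynomial.C ξ))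
    (htr : A 0 0 + A 1 1 + A 2 2 = a)
    (hs : A 0 0 * A 1 1 + A 0 0 * A 2 2 + A 1 1 * A 2 2
          - A 0 1 * A 1 0 - A 0 2 * A 2 0 - A 1 2 * A 2 1 = -a^2)
    (hd : A.det = -a^3) : a = 1 := by
  have e1 := cpeval hcp 1
  have e0 := cpeval hcp 0
  rw [htr, hs, hd] at e1 e0
  have hfac : (a - 1)^2 * (a + 1) = 0 := by linear_combination e1
  rcases mul_eq_zero.mp hfac with h | h
  · have := pow_eq_zero_iff (n := 2) (by norm_num) |>.mp h
    linear_combination this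
  · exfalso; apply hξ1
    linear_combination e0 - (a^2 - a + 1) * h

set_option maxHeartbeats 4000000 in
private lemma partI {k : Type*} [Field k] [CharZero k]
    (M : Matrix (Fin 3) (Fin 3) k) (hM : IsUnit M.det) :
    IsPoissonAut (jacBracket 0 (2 * X 0 * X 1 + X 1 ^ 2) (X 0 ^ 2 + 2 * X 0 * X 1)) M ↔
      ∃ a b c : k, a ≠ 0 ∧
        (M = !![0, a, 0; -a, -a, 0; b, c, a] ∨ M = !![0, -a, 0; -a, 0, 0; b, c, a] ∨
          M = !![-a, 0, 0; a, a, 0; b, c, a] ∨ M = !![-a, -a, 0; a, 0, 0; b, c, a] ∨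
          M = !![a, a, 0; 0, -a, 0; b, c, a] ∨ M = !![a, 0, 0; 0, a, 0; b, c, a]) := by
  rw [aut_iff]
  constructor
  · rintro ⟨-, h2, h3⟩
    simp only [phiM, jacBracket, map_add, map_mul, map_pow, map_ofNat, aeval_X,
      Fin.sum_univ_three, pderiv_C_mul, pderiv_X, Pi.single_apply, Fin.reduceEq,
      if_true, if_false, ite_true, ite_false, reduceIte] at h2 h3
    have e2z := congrArg (eval ![(0:k),0,1]) h2
    have e2x := congrArg (eval ![(1:k),0,0]) h2
    have e2y := congrArg (eval ![(0:k),1,0]) h2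
    have e3z := congrArg (eval ![(0:k),0,1]) h3
    have e3x := congrArg (eval ![(1:k),0,0]) h3
    have e3y := congrArg (eval ![(0:k),1,0]) h3
    simp only [eval_add, eval_mul, eval_pow, eval_C, eval_X, eval_sub, eval_zero, map_ofNat,
      Matrix.cons_val_zero, Matrix.cons_val_one, Matrix.cons_val_two, Matrix.head_cons,
      Matrix.tail_cons] at e2z e2x e2y e3z e3x e3y
    norm_num at e2z e2x e2y e3z e3x e3y
    clear h2 h3
    -- a02 = a12 = 0
    have h3' : (3:k) ≠ 0 := by norm_num
    have ha02 : M 0 2 = 0 := by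
      rcases mul_eq_zero.mp (show M 1 2 * (2 * M 0 2 + M 1 2) = 0 by linear_combination e2z)
        with h | h
      · have : M 0 2 ^ 2 = 0 := by linear_combination e3z - 2 * M 0 2 * h
        exact pow_eq_zero_iff (n := 2) (by norm_num) |>.mp this
      · have h32 : (3:k) * M 0 2 ^ 2 = 0 := by linear_combination -e3z + 2 * M 0 2 * h
        have := (mul_eq_zero.mp h32).resolve_left h3'
        exact pow_eq_zero_iff (n := 2) (by norm_num) |>.mp this
    have ha12 : M 1 2 = 0 := by
      rcases mul_eq_zero.mp (show M 1 2 * (2 * M 0 2 + M 1 2) = 0 by linear_combination e2z)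
        with h | h
      · exact h
      · rw [ha02] at h; linear_combination h
    have hdet : M.det ≠ 0 := hM.ne_zero
    rw [Matrix.det_fin_three, ha02, ha12] at hdet
    have hfac : (M 0 0 * M 1 1 - M 0 1 * M 1 0) * M 2 2 ≠ 0 := fun h => hdet (by linear_combination h)
    obtain ⟨hd, ht⟩ := mul_ne_zero_iff.mp hfac
    have E2x : M 1 0 * (2 * M 0 0 + M 1 0 + M 2 2) = 0 := by
      linear_combination e2x + M 2 0 * ha12
    have E2y : M 1 1 * (2 * M 0 1 + M 1 1 - M 2 2) = 0 := by
      linear_combination e2y - M 2 1 * ha12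
    have E3x : M 0 0 * (M 0 0 + 2 * M 1 0 - M 2 2) = 0 := by
      linear_combination e3x - M 2 0 * ha02
    have E3y : M 0 1 * (M 0 1 + 2 * M 1 1 + M 2 2) = 0 := by
      linear_combination e3y + M 2 1 * ha02
    refine ⟨M 2 2, M 2 0, M 2 1, ht, ?_⟩
    rcases eq_or_ne (M 1 0) 0 with h10 | h10
    · -- C1 : a10 = 0
      have h00 : M 0 0 ≠ 0 := fun h => hd (by rw [h, h10]; ring)
      have h11 : M 1 1 ≠ 0 := fun h => hd (by rw [h, h10]; ring)
      have ha00 : M 0 0 = M 2 2 := by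
        have := (mul_eq_zero.mp E3x).resolve_left h00
        linear_combination this - 2 * h10
      have hE2y : 2 * M 0 1 + M 1 1 - M 2 2 = 0 := (mul_eq_zero.mp E2y).resolve_left h11
      rcases eq_or_ne (M 0 1) 0 with h01 | h01
      · -- family 6
        have ha11 : M 1 1 = M 2 2 := by linear_combination hE2y - 2 * h01
        right; right; right; right; right
        conv_lhs => rw [Matrix.eta_fin_three M]
        rw [ha00, h01, ha02, h10, ha11, ha12]
      · -- family 5
        have hE3y := (mul_eq_zero.mp E3y).resolve_left h01
        have ha01 : M 0 1 = M 2 2 := by linear_combination (2 * hE2y - hE3y) / 3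
        have ha11 : M 1 1 = -M 2 2 := by linear_combination (-hE2y + 2 * hE3y) / 3
        right; right; right; right; left
        conv_lhs => rw [Matrix.eta_fin_three M]
        rw [ha00, ha01, ha02, h10, ha11, ha12]
    · -- C2 : a10 ≠ 0
      have hE2x : 2 * M 0 0 + M 1 0 + M 2 2 = 0 := (mul_eq_zero.mp E2x).resolve_left h10
      rcases eq_or_ne (M 1 1) 0 with h11 | h11
      · -- C2a : a11 = 0
        have h01 : M 0 1 ≠ 0 := fun h => hd (by rw [h, h11]; ring)
        have ha01 : M 0 1 = -M 2 2 := by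
          have := (mul_eq_zero.mp E3y).resolve_left h01
          linear_combination this - 2 * h11
        rcases eq_or_ne (M 0 0) 0 with h00 | h00
        · -- family 2
          have ha10 : M 1 0 = -M 2 2 := by linear_combination hE2x - 2 * h00
          right; left
          conv_lhs => rw [Matrix.eta_fin_three M]
          rw [h00, ha01, ha02, ha10, h11, ha12]
        · -- family 4
          have hE3x := (mul_eq_zero.mp E3x).resolve_left h00
          have ha00 : M 0 0 = -M 2 2 := by linear_combination (2 * hE2x - hE3x) / 3
          have ha10 : M 1 0 = M 2 2 := by linear_combination (-hE2x + 2 * hE3x) / 3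
          right; right; right; left
          conv_lhs => rw [Matrix.eta_fin_three M]
          rw [ha00, ha01, ha02, ha10, h11, ha12]
      · -- C2b : a11 ≠ 0
        have hE2y : 2 * M 0 1 + M 1 1 - M 2 2 = 0 := (mul_eq_zero.mp E2y).resolve_left h11
        rcases eq_or_ne (M 0 0) 0 with h00 | h00
        · -- family 1
          have ha10 : M 1 0 = -M 2 2 := by linear_combination hE2x - 2 * h00
          have h01 : M 0 1 ≠ 0 := fun h => hd (by rw [h, h00]; ring)
          have hE3y := (mul_eq_zero.mp E3y).resolve_left h01
          have ha01 : M 0 1 = M 2 2 := by linear_combination (2 * hE2y - hE3y) / 3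
          have ha11 : M 1 1 = -M 2 2 := by linear_combination (-hE2y + 2 * hE3y) / 3
          left
          conv_lhs => rw [Matrix.eta_fin_three M]
          rw [h00, ha01, ha02, ha10, ha11, ha12]
        · -- C2b2
          have hE3x := (mul_eq_zero.mp E3x).resolve_left h00
          have ha00 : M 0 0 = -M 2 2 := by linear_combination (2 * hE2x - hE3x) / 3
          have ha10 : M 1 0 = M 2 2 := by linear_combination (-hE2x + 2 * hE3x) / 3
          rcases eq_or_ne (M 0 1) 0 with h01 | h01
          · -- family 3
            have ha11 : M 1 1 = M 2 2 := by linear_combination hE2y - 2 * h01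
            right; right; left
            conv_lhs => rw [Matrix.eta_fin_three M]
            rw [ha00, h01, ha02, ha10, ha11, ha12]
          · -- contradiction
            have hE3y := (mul_eq_zero.mp E3y).resolve_left h01
            have ha01 : M 0 1 = M 2 2 := by linear_combination (2 * hE2y - hE3y) / 3
            have ha11 : M 1 1 = -M 2 2 := by linear_combination (-hE2y + 2 * hE3y) / 3
            exact absurd (by rw [ha00, ha01, ha10, ha11]; ring) hd
  · rintro ⟨a, b, c, ha, h | h | h | h | h | h⟩ <;> subst h <;>
      refine ⟨?_, ?_, ?_⟩ <;>
      · simp only [phiM, jacBracket, map_add, map_mul, map_pow, map_ofNat, map_zero, aeval_X,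
          Fin.sum_univ_three, pderiv_C_mul, pderiv_X, Pi.single_apply, Fin.reduceEq,
          if_true, if_false, ite_true, ite_false, reduceIte]
        simp only [Matrix.cons_val_zero, Matrix.cons_val_one, Matrix.cons_val_two,
          Matrix.head_cons, Matrix.tail_cons, Matrix.of_apply, map_neg, C_0, C_1]
        ring

set_option maxHeartbeats 4000000 in
/-- Case `{x₁,x₂} = 0`, `{x₂,x₃} = 2x₁x₂ + x₂²`, `{x₃,x₁} = x₁² + 2x₁x₂`. -/
theorem stmt_6 {k : Type*} [Field k] [IsAlgClosed k] [CharZero k]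
    (M : Matrix (Fin 3) (Fin 3) k) (hM : IsUnit M.det) :
    (IsPoissonAut (jacBracket 0 (2 * X 0 * X 1 + X 1 ^ 2) (X 0 ^ 2 + 2 * X 0 * X 1)) M ↔
      ∃ a b c : k, a ≠ 0 ∧
        (M = !![0, a, 0; -a, -a, 0; b, c, a] ∨ M = !![0, -a, 0; -a, 0, 0; b, c, a] ∨
          M = !![-a, 0, 0; a, a, 0; b, c, a] ∨ M = !![-a, -a, 0; a, 0, 0; b, c, a] ∨
          M = !![a, a, 0; 0, -a, 0; b, c, a] ∨ M = !![a, 0, 0; 0, a, 0; b, c, a])) ∧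
    (IsPoissonReflection (jacBracket 0 (2 * X 0 * X 1 + X 1 ^ 2) (X 0 ^ 2 + 2 * X 0 * X 1)) M ↔
      ∃ b c : k,
        (M = !![0, -1, 0; -1, 0, 0; b, b, 1] ∨ M = !![-1, 0, 0; 1, 1, 0; b, 0, 1] ∨
          M = !![1, 1, 0; 0, -1, 0; 0, c, 1])) := by
  refine ⟨partI M hM, ?_, ?_⟩
  · rintro ⟨haut, ⟨n, hn, hMn⟩, ξ, hξ1, ⟨m, hm, hξm⟩, hcp⟩
    have hn' : (n:k) ≠ 0 := Nat.cast_ne_zero.mpr hn.ne'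
    obtain ⟨a, b, c, ha, hfam⟩ := (partI M hM).mp haut
    rcases hfam with h|h|h|h|h|h <;> subst h
    · exact (fam14_contra hξ1 hcp (by simp [Matrix.cons_val_zero, Matrix.cons_val_one, Matrix.cons_val_two, Matrix.head_cons, Matrix.tail_cons, Matrix.of_apply, Matrix.cons_val', Matrix.empty_val', Matrix.cons_val_fin_one]; try ring) (by simp [Matrix.cons_val_zero, Matrix.cons_val_one, Matrix.cons_val_two, Matrix.head_cons, Matrix.tail_cons, Matrix.of_apply, Matrix.cons_val', Matrix.empty_val', Matrix.cons_val_fin_one]; try ring)).elim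
    · -- family 2 : a = 1, then b = c
      have ha1 : a = 1 := fam235_a hξ1 hcp (by simp [Matrix.cons_val_zero, Matrix.cons_val_one, Matrix.cons_val_two, Matrix.head_cons, Matrix.tail_cons, Matrix.of_apply, Matrix.cons_val', Matrix.empty_val', Matrix.cons_val_fin_one]; try ring) (by simp [Matrix.cons_val_zero, Matrix.cons_val_one, Matrix.cons_val_two, Matrix.head_cons, Matrix.tail_cons, Matrix.of_apply, Matrix.cons_val', Matrix.empty_val', Matrix.cons_val_fin_one]; try ring)
        (by rw [Matrix.det_fin_three]; simp [Matrix.cons_val_zero, Matrix.cons_val_one, Matrix.cons_val_two, Matrix.head_cons, Matrix.tail_cons, Matrix.of_apply, Matrix.cons_val', Matrix.empty_val', Matrix.cons_val_fin_one]; try ring)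
      subst ha1
      have hM2 : (!![0, -1, 0; -1, 0, 0; b, c, 1] : Matrix (Fin 3) (Fin 3) k) ^ 2
          = !![1,0,0;0,1,0;b-c,c-b,1] := by
        rw [pow_two, Matrix.mul_fin_three]
        ext i j; fin_cases i <;> fin_cases j <;> simp [Matrix.cons_val_zero, Matrix.cons_val_one, Matrix.cons_val_two, Matrix.head_cons, Matrix.tail_cons, Matrix.of_apply, Matrix.cons_val', Matrix.empty_val', Matrix.cons_val_fin_one] <;> ring
      have hp : ((!![0, -1, 0; -1, 0, 0; b, c, 1] : Matrix (Fin 3) (Fin 3) k) ^ 2) ^ n = 1 := by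
        rw [← pow_mul, mul_comm 2 n, pow_mul, hMn, one_pow]
      rw [hM2, shear_pow] at hp
      have h20 := congrFun (congrFun hp 2) 0
      simp only [Matrix.cons_val_zero, Matrix.cons_val_one, Matrix.cons_val_two, Matrix.head_cons, Matrix.tail_cons, Matrix.of_apply, Matrix.cons_val', Matrix.empty_val', Matrix.cons_val_fin_one, Matrix.one_apply, Fin.reduceEq, reduceIte, if_true, if_false] at h20
      have hbc : b = c := by
        have := (mul_eq_zero.mp h20).resolve_left hn'
        linear_combination this
      exact ⟨b, 0, Or.inl (by rw [← hbc])⟩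
    · -- family 3 : a = 1, then c = 0
      have ha1 : a = 1 := fam235_a hξ1 hcp (by simp [Matrix.cons_val_zero, Matrix.cons_val_one, Matrix.cons_val_two, Matrix.head_cons, Matrix.tail_cons, Matrix.of_apply, Matrix.cons_val', Matrix.empty_val', Matrix.cons_val_fin_one]; try ring) (by simp [Matrix.cons_val_zero, Matrix.cons_val_one, Matrix.cons_val_two, Matrix.head_cons, Matrix.tail_cons, Matrix.of_apply, Matrix.cons_val', Matrix.empty_val', Matrix.cons_val_fin_one]; try ring)
        (by rw [Matrix.det_fin_three]; simp [Matrix.cons_val_zero, Matrix.cons_val_one, Matrix.cons_val_two, Matrix.head_cons, Matrix.tail_cons, Matrix.of_apply, Matrix.cons_val', Matrix.empty_val', Matrix.cons_val_fin_one]; try ring)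
      subst ha1
      have hM2 : (!![-1, 0, 0; 1, 1, 0; b, c, 1] : Matrix (Fin 3) (Fin 3) k) ^ 2
          = !![1,0,0;0,1,0;c,2*c,1] := by
        rw [pow_two, Matrix.mul_fin_three]
        ext i j; fin_cases i <;> fin_cases j <;> simp [Matrix.cons_val_zero, Matrix.cons_val_one, Matrix.cons_val_two, Matrix.head_cons, Matrix.tail_cons, Matrix.of_apply, Matrix.cons_val', Matrix.empty_val', Matrix.cons_val_fin_one] <;> ring
      have hp : ((!![-1, 0, 0; 1, 1, 0; b, c, 1] : Matrix (Fin 3) (Fin 3) k) ^ 2) ^ n = 1 := by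
        rw [← pow_mul, mul_comm 2 n, pow_mul, hMn, one_pow]
      rw [hM2, shear_pow] at hp
      have h20 := congrFun (congrFun hp 2) 0
      simp only [Matrix.cons_val_zero, Matrix.cons_val_one, Matrix.cons_val_two, Matrix.head_cons, Matrix.tail_cons, Matrix.of_apply, Matrix.cons_val', Matrix.empty_val', Matrix.cons_val_fin_one, Matrix.one_apply, Fin.reduceEq, reduceIte, if_true, if_false] at h20
      have hc0 : c = 0 := (mul_eq_zero.mp h20).resolve_left hn'
      exact ⟨b, 0, Or.inr (Or.inl (by rw [hc0]))⟩
    · exact (fam14_contra hξ1 hcp (by simp [Matrix.cons_val_zero, Matrix.cons_val_one, Matrix.cons_val_two, Matrix.head_cons, Matrix.tail_cons, Matrix.of_apply, Matrix.cons_val', Matrix.empty_val', Matrix.cons_val_fin_one]; try ring) (by simp [Matrix.cons_val_zero, Matrix.cons_val_one, Matrix.cons_val_two, Matrix.head_cons, Matrix.tail_cons, Matrix.of_apply, Matrix.cons_val', Matrix.empty_val', Matrix.cons_val_fin_one]; try ring)).elim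
    · -- family 5 : a = 1, then b = 0
      have ha1 : a = 1 := fam235_a hξ1 hcp (by simp [Matrix.cons_val_zero, Matrix.cons_val_one, Matrix.cons_val_two, Matrix.head_cons, Matrix.tail_cons, Matrix.of_apply, Matrix.cons_val', Matrix.empty_val', Matrix.cons_val_fin_one]; try ring) (by simp [Matrix.cons_val_zero, Matrix.cons_val_one, Matrix.cons_val_two, Matrix.head_cons, Matrix.tail_cons, Matrix.of_apply, Matrix.cons_val', Matrix.empty_val', Matrix.cons_val_fin_one]; try ring)
        (by rw [Matrix.det_fin_three]; simp [Matrix.cons_val_zero, Matrix.cons_val_one, Matrix.cons_val_two, Matrix.head_cons, Matrix.tail_cons, Matrix.of_apply, Matrix.cons_val', Matrix.empty_val', Matrix.cons_val_fin_one]; try ring)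
      subst ha1
      have hM2 : (!![1, 1, 0; 0, -1, 0; b, c, 1] : Matrix (Fin 3) (Fin 3) k) ^ 2
          = !![1,0,0;0,1,0;2*b,b,1] := by
        rw [pow_two, Matrix.mul_fin_three]
        ext i j; fin_cases i <;> fin_cases j <;> simp [Matrix.cons_val_zero, Matrix.cons_val_one, Matrix.cons_val_two, Matrix.head_cons, Matrix.tail_cons, Matrix.of_apply, Matrix.cons_val', Matrix.empty_val', Matrix.cons_val_fin_one] <;> ring
      have hp : ((!![1, 1, 0; 0, -1, 0; b, c, 1] : Matrix (Fin 3) (Fin 3) k) ^ 2) ^ n = 1 := by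
        rw [← pow_mul, mul_comm 2 n, pow_mul, hMn, one_pow]
      rw [hM2, shear_pow] at hp
      have h21 := congrFun (congrFun hp 2) 1
      simp only [Matrix.cons_val_zero, Matrix.cons_val_one, Matrix.cons_val_two, Matrix.head_cons, Matrix.tail_cons, Matrix.of_apply, Matrix.cons_val', Matrix.empty_val', Matrix.cons_val_fin_one, Matrix.one_apply, Fin.reduceEq, reduceIte, if_true, if_false] at h21
      have hb0 : b = 0 := (mul_eq_zero.mp h21).resolve_left hn'
      exact ⟨0, c, Or.inr (Or.inr (by rw [hb0]))⟩
    · exact (fam6_contra hξ1 hcp (by simp [Matrix.cons_val_zero, Matrix.cons_val_one, Matrix.cons_val_two, Matrix.head_cons, Matrix.tail_cons, Matrix.of_apply, Matrix.cons_val', Matrix.empty_val', Matrix.cons_val_fin_one]; try ring) (by simp [Matrix.cons_val_zero, Matrix.cons_val_one, Matrix.cons_val_two, Matrix.head_cons, Matrix.tail_cons, Matrix.of_apply, Matrix.cons_val', Matrix.empty_val', Matrix.cons_val_fin_one]; try ring)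
        (by rw [Matrix.det_fin_three]; simp [Matrix.cons_val_zero, Matrix.cons_val_one, Matrix.cons_val_two, Matrix.head_cons, Matrix.tail_cons, Matrix.of_apply, Matrix.cons_val', Matrix.empty_val', Matrix.cons_val_fin_one]; try ring)).elim
  · rintro ⟨b, c, h|h|h⟩ <;> subst h
    · refine ⟨(partI _ hM).mpr ⟨1, b, b, one_ne_zero, Or.inr (Or.inl (by norm_num))⟩,
        ⟨2, two_pos, ?_⟩, -1, by norm_num, ⟨2, two_pos, by norm_num⟩, ?_⟩
      · rw [pow_two, Matrix.mul_fin_three, Matrix.one_fin_three]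
        ext i j; fin_cases i <;> fin_cases j <;> norm_num [Matrix.cons_val_zero, Matrix.cons_val_one, Matrix.cons_val_two, Matrix.head_cons, Matrix.tail_cons, Matrix.of_apply, Matrix.cons_val', Matrix.empty_val', Matrix.cons_val_fin_one]
      · rw [cp3, Matrix.det_fin_three]
        simp only [Matrix.cons_val_zero, Matrix.cons_val_one, Matrix.cons_val_two, Matrix.head_cons, Matrix.tail_cons, Matrix.of_apply, Matrix.cons_val', Matrix.empty_val', Matrix.cons_val_fin_one]
        norm_num
        ring
    · refine ⟨(partI _ hM).mpr ⟨1, b, 0, one_ne_zero,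
          Or.inr (Or.inr (Or.inl (by norm_num)))⟩,
        ⟨2, two_pos, ?_⟩, -1, by norm_num, ⟨2, two_pos, by norm_num⟩, ?_⟩
      · rw [pow_two, Matrix.mul_fin_three, Matrix.one_fin_three]
        ext i j; fin_cases i <;> fin_cases j <;> norm_num [Matrix.cons_val_zero, Matrix.cons_val_one, Matrix.cons_val_two, Matrix.head_cons, Matrix.tail_cons, Matrix.of_apply, Matrix.cons_val', Matrix.empty_val', Matrix.cons_val_fin_one]
      · rw [cp3, Matrix.det_fin_three]
        simp only [Matrix.cons_val_zero, Matrix.cons_val_one, Matrix.cons_val_two, Matrix.head_cons, Matrix.tail_cons, Matrix.of_apply, Matrix.cons_val', Matrix.empty_val', Matrix.cons_val_fin_one]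
        norm_num
        ring
    · refine ⟨(partI _ hM).mpr ⟨1, 0, c, one_ne_zero,
          Or.inr (Or.inr (Or.inr (Or.inr (Or.inl (by norm_num)))))⟩,
        ⟨2, two_pos, ?_⟩, -1, by norm_num, ⟨2, two_pos, by norm_num⟩, ?_⟩
      · rw [pow_two, Matrix.mul_fin_three, Matrix.one_fin_three]
        ext i j; fin_cases i <;> fin_cases j <;> norm_num [Matrix.cons_val_zero, Matrix.cons_val_one, Matrix.cons_val_two, Matrix.head_cons, Matrix.tail_cons, Matrix.of_apply, Matrix.cons_val', Matrix.empty_val', Matrix.cons_val_fin_one]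
      · rw [cp3, Matrix.det_fin_three]
        simp only [Matrix.cons_val_zero, Matrix.cons_val_one, Matrix.cons_val_two, Matrix.head_cons, Matrix.tail_cons, Matrix.of_apply, Matrix.cons_val', Matrix.empty_val', Matrix.cons_val_fin_one]
        norm_num
        ring
end

section
/- Equip P = k[x₁,x₂,x₃] with the Poisson bracket {x₁,x₂} = x₂², {x₂,x₃} = 3x₁², {x₃,x₁} = 2x₂x₃. Then for an invertible matrix M = (a_{ij}), φ_M is a graded Poisson automorphism of P if and only if M = a·I₃ for some a ∈ k \ {0}. In particular, P has no Poisson reflections. -/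
open MvPolynomial

/-- Pure scalar algebra behind the classification. -/
lemma algKey_stmt7 {k : Type*} [Field k] [CharZero k] (a b c d e f g h i : k)
    (A1 : d^2 = (b*f - c*e)*3) (A2 : e^2 = a*e - b*d) (A3 : f = 0)
    (A4 : (d+e)^2 = a*e - b*d + (b*f - c*e)*3)
    (B1 : 3*a^2 = (e*i - f*h)*3) (B2 : 3*b^2 = d*h - e*g) (B3 : c = 0)
    (B4 : 3*(a+b)^2 = d*h - e*g + (e*i - f*h)*3)
    (B5 : 3*(b+c)^2 = d*h - e*g + (f*g - d*i)*2)
    (C2 : 2*e*h = g*b - h*a)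
    (C4 : 2*(d+e)*(g+h) = g*b - h*a + (h*c - i*b)*3)
    (C5 : 2*(e+f)*(h+i) = g*b - h*a + (i*a - g*c)*2)
    (hdet : a*e*i - a*f*h - b*d*i + b*f*g + c*d*h - c*e*g ≠ 0) :
    a ≠ 0 ∧ b = 0 ∧ c = 0 ∧ d = 0 ∧ e = a ∧ f = 0 ∧ g = 0 ∧ h = 0 ∧ i = a := by
  subst A3 B3
  have hde : d*e = 0 := by
    have h' : 2*(d*e) = 0 := by linear_combination A4 - A1 - A2
    exact (mul_eq_zero.mp h').resolve_left two_ne_zero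
  have hab : a*b = 0 := by
    have h' : 6*(a*b) = 0 := by linear_combination B4 - B1 - B2
    exact (mul_eq_zero.mp h').resolve_left (by norm_num)
  have hdi : d*i = 0 := by
    have h' : 2*(d*i) = 0 := by linear_combination B5 - B2
    exact (mul_eq_zero.mp h').resolve_left two_ne_zero
  have haei : a*(e*i) ≠ 0 := fun h0 => hdet (by linear_combination h0 - b*hdi)
  have ha : a ≠ 0 := fun hx => haei (by rw [hx, zero_mul])
  have he : e ≠ 0 := fun hx => haei (by rw [hx, zero_mul, mul_zero])
  have hi : i ≠ 0 := fun hx => haei (by rw [hx, mul_zero, mul_zero])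
  have hb : b = 0 := (mul_eq_zero.mp hab).resolve_left ha
  have hd : d = 0 := (mul_eq_zero.mp hde).resolve_right he
  subst hb hd
  have hea : e = a := by
    have h' : i*(e - a) = 0 := by linear_combination C5/2 - C2/2
    exact sub_eq_zero.mp ((mul_eq_zero.mp h').resolve_left hi)
  have hh : h = 0 := by
    have h' : 3*(a*h) = 0 := by linear_combination C2 - 2*h*hea
    exact (mul_eq_zero.mp ((mul_eq_zero.mp h').resolve_left (by norm_num))).resolve_left ha
  have hg : g = 0 := by
    have h' : 2*(e*g) = 0 := by linear_combination C4 - (2*e + a)*hh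
    exact (mul_eq_zero.mp ((mul_eq_zero.mp h').resolve_left two_ne_zero)).resolve_left he
  have hia : i = a := by
    have h' : a*(a - i) = 0 := by linear_combination B1/3 + i*hea
    exact (sub_eq_zero.mp ((mul_eq_zero.mp h').resolve_left ha)).symm
  exact ⟨ha, rfl, rfl, rfl, hea, rfl, hg, hh, hia⟩

lemma pderiv_scale_stmt7 {k : Type*} [Field k] (a : k) (p : Fin 3)
    (f : MvPolynomial (Fin 3) k) :
    pderiv p (aeval (fun j => C a * X j : Fin 3 → MvPolynomial (Fin 3) k) f) =
      C a * aeval (fun j => C a * X j : Fin 3 → MvPolynomial (Fin 3) k) (pderiv p f) := by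
  rw [aeval_eq_bind₁]
  induction f using MvPolynomial.induction_on with
  | C c => simp
  | add f g hf hg => simp [hf, hg, mul_add]
  | mul_X f j hf =>
    rcases eq_or_ne p j with rfl | hne
    · simp [pderiv_mul, hf, pderiv_X_self]; ring
    · simp [pderiv_mul, hf, pderiv_X_of_ne (Ne.symm hne)]; ring

lemma phiM_smul_one_stmt7 {k : Type*} [Field k] (a : k) (f : MvPolynomial (Fin 3) k) :
    phiM (a • (1 : Matrix (Fin 3) (Fin 3) k)) f =
      aeval (fun j => C a * X j : Fin 3 → MvPolynomial (Fin 3) k) f := by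
  have : (phiM (a • (1 : Matrix (Fin 3) (Fin 3) k))) =
      (aeval (fun j => C a * X j : Fin 3 → MvPolynomial (Fin 3) k)) := by
    apply MvPolynomial.algHom_ext
    intro i
    fin_cases i <;>
      simp [phiM, Fin.sum_univ_three, Matrix.smul_apply, Matrix.one_apply]
  rw [this]

lemma scalar_aut_stmt7 {k : Type*} [Field k] (a : k) :
    IsPoissonAut (jacBracket (X 1 ^ 2) (3 * X 0 ^ 2) (2 * X 1 * X 2))
      (a • (1 : Matrix (Fin 3) (Fin 3) k)) := by
  intro f g
  simp only [jacBracket, phiM_smul_one_stmt7, map_add, map_sub, map_mul, map_pow, map_ofNat,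
    pderiv_scale_stmt7, aeval_X]
  ring

lemma charpoly_smul_one_stmt7 {k : Type*} [Field k] (a : k) :
    (a • (1 : Matrix (Fin 3) (Fin 3) k)).charpoly =
      (Polynomial.X - Polynomial.C a)^3 := by
  rw [Matrix.charpoly, Matrix.charmatrix, Matrix.det_fin_three]
  simp [Matrix.smul_apply, Matrix.one_apply, Matrix.diagonal, Matrix.sub_apply,
    Matrix.map_apply]
  ring

lemma no_refl_aux_stmt7 {k : Type*} [Field k] [CharZero k] (a ξ : k) (hξ : ξ ≠ 1)
    (h : ((Polynomial.X : Polynomial k) - Polynomial.C a)^3 =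
      (Polynomial.X - 1)^2 * (Polynomial.X - Polynomial.C ξ)) : False := by
  open Polynomial in
  have h1 : a = 1 := by
    have h' := congrArg (Polynomial.eval 1) h
    simp only [Polynomial.eval_pow, Polynomial.eval_mul, Polynomial.eval_sub,
      Polynomial.eval_X, Polynomial.eval_C, Polynomial.eval_one] at h'
    have h'' : (1 - a)^3 = 0 := by rw [h']; ring
    have := pow_eq_zero_iff (n := 3) (by norm_num) |>.mp h''
    exact (sub_eq_zero.mp this).symm
  subst h1
  rw [map_one] at h
  have hX : ((Polynomial.X : Polynomial k) - 1) ≠ 0 := by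
    have := Polynomial.X_sub_C_ne_zero (1 : k)
    simpa using this
  have h2 : ((Polynomial.X : Polynomial k) - 1)^2 * (Polynomial.X - 1) =
      (Polynomial.X - 1)^2 * (Polynomial.X - Polynomial.C ξ) := by rw [← h]; ring
  have h3 := mul_left_cancel₀ (pow_ne_zero 2 hX) h2
  have h4 : (1 : Polynomial k) = Polynomial.C ξ := sub_right_injective h3
  rw [← map_one (Polynomial.C : k →+* Polynomial k)] at h4
  exact hξ (Polynomial.C_injective h4).symm

set_option maxHeartbeats 1000000 in
lemma scalar_of_aut_stmt7 {k : Type*} [Field k] [CharZero k]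
    (M : Matrix (Fin 3) (Fin 3) k) (hM : IsUnit M.det)
    (hP : IsPoissonAut (jacBracket (X 1 ^ 2) (3 * X 0 ^ 2) (2 * X 1 * X 2)) M) :
    ∃ a : k, a ≠ 0 ∧ M = a • (1 : Matrix (Fin 3) (Fin 3) k) := by
  have E1 := fun v : Fin 3 → k => congrArg (eval v) (hP (X 0) (X 1))
  have E2 := fun v : Fin 3 → k => congrArg (eval v) (hP (X 1) (X 2))
  have E3 := fun v : Fin 3 → k => congrArg (eval v) (hP (X 2) (X 0))
  simp only [phiM, jacBracket, aeval_X, Fin.sum_univ_three, pderiv_X, Pi.single_apply,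
    map_add, map_sub, map_mul, map_pow, map_ofNat, eval_X, eval_C, eval_mul, eval_add,
    eval_sub, eval_pow, eval_ofNat, pderiv_mul, pderiv_C_mul] at E1 E2 E3
  simp at E1 E2 E3
  have A1 := E1 ![1,0,0]; have A2 := E1 ![0,1,0]; have A3 := E1 ![0,0,1]
  have A4 := E1 ![1,1,0]
  have B1 := E2 ![1,0,0]; have B2 := E2 ![0,1,0]; have B3 := E2 ![0,0,1]
  have B4 := E2 ![1,1,0]; have B5 := E2 ![0,1,1]
  have C2 := E3 ![0,1,0]; have C4 := E3 ![1,1,0]; have C5 := E3 ![0,1,1]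
  simp at A1 A2 A3 A4 B1 B2 B3 B4 B5 C2 C4 C5
  have hdet : M 0 0 * M 1 1 * M 2 2 - M 0 0 * M 1 2 * M 2 1 - M 0 1 * M 1 0 * M 2 2 +
      M 0 1 * M 1 2 * M 2 0 + M 0 2 * M 1 0 * M 2 1 - M 0 2 * M 1 1 * M 2 0 ≠ 0 := by
    rw [← Matrix.det_fin_three]
    exact hM.ne_zero
  obtain ⟨ha, hb, hc, hd, he, hf, hg, hh, hi⟩ :=
    algKey_stmt7 (M 0 0) (M 0 1) (M 0 2) (M 1 0) (M 1 1) (M 1 2) (M 2 0) (M 2 1) (M 2 2)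
      A1 A2 A3 A4 B1 B2 B3 B4 B5 C2 C4 C5 (by intro h0; exact hdet (by linear_combination h0))
  refine ⟨M 0 0, ha, ?_⟩
  ext i j
  fin_cases i <;> fin_cases j <;>
    simp [Matrix.smul_apply, Matrix.one_apply, hb, hc, hd, he, hf, hg, hh, hi]

/-- Case `{x₁,x₂} = x₂²`, `{x₂,x₃} = 3x₁²`, `{x₃,x₁} = 2x₂x₃`. -/
theorem stmt_7 {k : Type*} [Field k] [IsAlgClosed k] [CharZero k]
    (M : Matrix (Fin 3) (Fin 3) k) (hM : IsUnit M.det) :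
    (IsPoissonAut (jacBracket (X 1 ^ 2) (3 * X 0 ^ 2) (2 * X 1 * X 2)) M ↔
      ∃ a : k, a ≠ 0 ∧ M = a • (1 : Matrix (Fin 3) (Fin 3) k)) ∧
    ¬ IsPoissonReflection (jacBracket (X 1 ^ 2) (3 * X 0 ^ 2) (2 * X 1 * X 2)) M := by
  constructor
  · constructor
    · exact scalar_of_aut_stmt7 M hM
    · rintro ⟨a, ha, rfl⟩
      exact scalar_aut_stmt7 a
  · rintro ⟨hAut, -, ξ, hξ, -, hcp⟩
    obtain ⟨a, ha, rfl⟩ := scalar_of_aut_stmt7 M hM hAut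
    rw [charpoly_smul_one_stmt7] at hcp
    exact no_refl_aux_stmt7 a ξ hξ hcp
end

section
/- Equip P = k[x₁,x₂,x₃] with the Poisson bracket {x₁,x₂} = x₁², {x₂,x₃} = 2x₁x₃ + x₂², {x₃,x₁} = 2x₁x₂. Then for an invertible matrix M = (a_{ij}), φ_M is a graded Poisson automorphism of P if and only if M = [[a,0,0],[b,a,0],[−b²/a,−2b,a]] for some a ∈ k \ {0} and b ∈ k. In particular, P has no Poisson reflections. -/
open MvPolynomial

section Aux

variable {k : Type*} [Field k]

lemma jb_C_left (p q r : MvPolynomial (Fin 3) k) (c : k) (g) :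
    jacBracket p q r (C c) g = 0 := by simp [jacBracket]

lemma jb_C_right (p q r : MvPolynomial (Fin 3) k) (c : k) (f) :
    jacBracket p q r f (C c) = 0 := by simp [jacBracket]

lemma jb_add_left (p q r : MvPolynomial (Fin 3) k) (f f' g) :
    jacBracket p q r (f + f') g = jacBracket p q r f g + jacBracket p q r f' g := by
  simp only [jacBracket, map_add]; ring

lemma jb_add_right (p q r : MvPolynomial (Fin 3) k) (f g g') :
    jacBracket p q r f (g + g') = jacBracket p q r f g + jacBracket p q r f g' := by
  simp only [jacBracket, map_add]; ring

lemma jb_mul_left (p q r : MvPolynomial (Fin 3) k) (f f' g) :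
    jacBracket p q r (f * f') g = f * jacBracket p q r f' g + f' * jacBracket p q r f g := by
  simp only [jacBracket, pderiv_mul]; ring

lemma jb_mul_right (p q r : MvPolynomial (Fin 3) k) (f g g') :
    jacBracket p q r f (g * g') = g * jacBracket p q r f g' + g' * jacBracket p q r f g := by
  simp only [jacBracket, pderiv_mul]; ring

lemma jb_key1 (p q r : MvPolynomial (Fin 3) k) (M : Matrix (Fin 3) (Fin 3) k)
    (h : ∀ i j : Fin 3, phiM M (jacBracket p q r (X i) (X j)) =
      jacBracket p q r (phiM M (X i)) (phiM M (X j))) (i : Fin 3) (g : MvPolynomial (Fin 3) k) :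
    phiM M (jacBracket p q r (X i) g) = jacBracket p q r (phiM M (X i)) (phiM M g) := by
  induction g using MvPolynomial.induction_on with
  | C c => rw [jb_C_right]; simp [jb_C_right]
  | add f g hf hg => rw [jb_add_right, map_add, hf, hg, map_add, jb_add_right]
  | mul_X f n hf => rw [jb_mul_right, map_add, map_mul, map_mul, hf, h, map_mul, jb_mul_right]

lemma jb_key (p q r : MvPolynomial (Fin 3) k) (M : Matrix (Fin 3) (Fin 3) k)
    (h : ∀ i j : Fin 3, phiM M (jacBracket p q r (X i) (X j)) =
      jacBracket p q r (phiM M (X i)) (phiM M (X j))) :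
    IsPoissonAut (jacBracket p q r) M := by
  intro f g
  induction f using MvPolynomial.induction_on with
  | C c => rw [jb_C_left]; simp [jb_C_left]
  | add f f' hf hf' => rw [jb_add_left, map_add, hf, hf', map_add, jb_add_left]
  | mul_X f n hf =>
      rw [jb_mul_left, map_add, map_mul, map_mul, hf, jb_key1 p q r M h, map_mul, jb_mul_left]

lemma pderiv_two (i : Fin 3) : pderiv i (2 : MvPolynomial (Fin 3) k) = 0 := by
  rw [← map_ofNat (C : k →+* MvPolynomial (Fin 3) k) 2, pderiv_C]

lemma charpoly_tri (a b c : k) :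
    (!![a,0,0;b,a,0;c,-2*b,a]).charpoly = (Polynomial.X - Polynomial.C a)^3 := by
  rw [Matrix.charpoly, Matrix.det_fin_three]
  simp [Matrix.charmatrix_apply, Matrix.diagonal]
  ring

set_option maxHeartbeats 2000000 in
lemma stmt10_aut_iff {k : Type*} [Field k] [CharZero k]
    (M : Matrix (Fin 3) (Fin 3) k) (hM : IsUnit M.det) :
    IsPoissonAut (jacBracket (X 0 ^ 2) (2 * X 0 * X 2 + X 1 ^ 2) (2 * X 0 * X 1)) M ↔
      ∃ a b : k, a ≠ 0 ∧ M = !![a, 0, 0; b, a, 0; -b ^ 2 / a, -2 * b, a] := by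
  have hdet : M.det ≠ 0 := hM.ne_zero
  constructor
  · intro h
    have t1 := congrArg (eval ![(0:k),0,1]) (h (X 0) (X 1))
    have t2 := congrArg (eval ![(1:k),0,1]) (h (X 0) (X 1))
    have t3 := congrArg (eval ![(0:k),1,1]) (h (X 0) (X 1))
    have t4 := congrArg (eval ![(1:k),0,0]) (h (X 0) (X 1))
    have t5 := congrArg (eval ![(1:k),1,0]) (h (X 0) (X 1))
    have s1 := congrArg (eval ![(1:k),0,0]) (h (X 2) (X 0))
    have s2 := congrArg (eval ![(1:k),1,0]) (h (X 2) (X 0))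
    have u1 := congrArg (eval ![(1:k),0,0]) (h (X 1) (X 2))
    simp [jacBracket, phiM, Fin.sum_univ_three, pderiv_X, map_ofNat] at t1
    simp [jacBracket, phiM, Fin.sum_univ_three, pderiv_X, map_ofNat] at t2
    simp [jacBracket, phiM, Fin.sum_univ_three, pderiv_X, map_ofNat] at t3
    simp [jacBracket, phiM, Fin.sum_univ_three, pderiv_X, map_ofNat] at t4
    simp [jacBracket, phiM, Fin.sum_univ_three, pderiv_X, map_ofNat] at t5
    simp [jacBracket, phiM, Fin.sum_univ_three, pderiv_X, map_ofNat] at s1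
    simp [jacBracket, phiM, Fin.sum_univ_three, pderiv_X, map_ofNat] at s2
    simp [jacBracket, phiM, Fin.sum_univ_three, pderiv_X, map_ofNat] at u1
    -- t1 : M 0 2 = 0
    rw [t1] at t2 t3 t5 s2
    have hbc : M 0 1 * M 1 2 = 0 := by linear_combination (1/2)*t4 - (1/2)*t2
    have hb2 : M 0 1 ^ 2 = 0 := by linear_combination t3 + hbc
    have hb0 : M 0 1 = 0 := by
      exact pow_eq_zero_iff (two_ne_zero) |>.mp hb2
    rw [hb0] at t4 t5 s1 s2
    have ha0 : M 0 0 ≠ 0 := by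
      intro h0
      apply hdet
      rw [Matrix.det_fin_three, h0, hb0, t1]; ring
    have hb1 : M 1 1 = M 0 0 := by
      have hx : M 0 0 * M 1 1 = M 0 0 * M 0 0 := by linear_combination -t4
      exact mul_left_cancel₀ ha0 hx
    have hc1 : M 1 2 = 0 := by
      have hx : M 0 0 * M 1 2 = M 0 0 * 0 := by linear_combination (1/2)*t5 - (1/2)*t4
      exact mul_left_cancel₀ ha0 hx
    have hb2' : M 2 1 = -2 * M 1 0 := by
      have hx : M 0 0 * M 2 1 = M 0 0 * (-2 * M 1 0) := by linear_combination s1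
      exact mul_left_cancel₀ ha0 hx
    have hc2 : M 2 2 = M 0 0 := by
      have hx : M 0 0 * M 2 2 = M 0 0 * M 0 0 := by
        linear_combination (1/2)*s1 - (1/2)*s2 + M 0 0 * hb1
      exact mul_left_cancel₀ ha0 hx
    have ha2 : M 2 0 = -(M 1 0) ^ 2 / M 0 0 := by
      rw [eq_div_iff ha0]
      linear_combination (1/3)*u1 + (1/3) * M 1 0 * hb2' - (1/3) * M 2 0 * hb1
    refine ⟨M 0 0, M 1 0, ha0, ?_⟩
    ext i j
    fin_cases i <;> fin_cases j <;>
      simp [t1, hb0, hb1, hc1, hb2', hc2, ha2, neg_div]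
  · rintro ⟨a, b, ha, rfl⟩
    apply jb_key
    have hkey : a * -(b^2 * a⁻¹) = -b^2 := by field_simp
    have hc' : (C a * C (-(b^2 * a⁻¹)) : MvPolynomial (Fin 3) k) = -(C b)^2 := by
      rw [← C_mul, hkey, map_neg, map_pow]
    have hatom : (C (-b^2/a) : MvPolynomial (Fin 3) k) = C (-(b^2 * a⁻¹)) := by
      rw [div_eq_mul_inv, neg_mul]
    intro i j
    fin_cases i <;> fin_cases j <;>
      simp [jacBracket, phiM, Fin.sum_univ_three, pderiv_X, map_ofNat, pderiv_two] <;>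
      first
        | linear_combination (3 * (X 0 : MvPolynomial (Fin 3) k)^2) * hc' +
            (3 * C a * (X 0 : MvPolynomial (Fin 3) k)^2) * hatom
        | linear_combination (-3 * (X 0 : MvPolynomial (Fin 3) k)^2) * hc' +
            (-3 * C a * (X 0 : MvPolynomial (Fin 3) k)^2) * hatom
        | ring

end Aux

/-- Case `{x₁,x₂} = x₁²`, `{x₂,x₃} = 2x₁x₃ + x₂²`, `{x₃,x₁} = 2x₁x₂`. -/
theorem stmt_10 {k : Type*} [Field k] [IsAlgClosed k] [CharZero k]
    (M : Matrix (Fin 3) (Fin 3) k) (hM : IsUnit M.det) :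
    (IsPoissonAut (jacBracket (X 0 ^ 2) (2 * X 0 * X 2 + X 1 ^ 2) (2 * X 0 * X 1)) M ↔
      ∃ a b : k, a ≠ 0 ∧ M = !![a, 0, 0; b, a, 0; -b ^ 2 / a, -2 * b, a]) ∧
    ¬ IsPoissonReflection (jacBracket (X 0 ^ 2) (2 * X 0 * X 2 + X 1 ^ 2) (2 * X 0 * X 1)) M := by
  refine ⟨stmt10_aut_iff M hM, ?_⟩
  rintro ⟨haut, -, ξ, hξ, -, hcp⟩
  obtain ⟨a, b, ha, rfl⟩ := (stmt10_aut_iff M hM).mp haut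
  rw [charpoly_tri] at hcp
  have ha1 : a = 1 := by
    have h0 := congrArg (Polynomial.eval 1) hcp
    simp at h0
    linear_combination -h0
  rw [ha1] at hcp
  have hone : (Polynomial.X - 1 : Polynomial k) ≠ 0 := by
    simpa using Polynomial.X_sub_C_ne_zero (1:k)
  have hcan : (Polynomial.X - 1 : Polynomial k) = Polynomial.X - Polynomial.C ξ := by
    apply mul_left_cancel₀ (pow_ne_zero 2 hone)
    rw [← hcp, Polynomial.C_1]
    ring
  have hC : (Polynomial.C ξ) = Polynomial.C (1:k) := by
    rw [Polynomial.C_1]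
    exact (sub_right_injective hcan).symm
  exact hξ (Polynomial.C_injective hC)
end

section
/- Equip P = k[x₁,x₂,x₃] with the Poisson bracket {x₁,x₂} = 0, {x₂,x₃} = 3x₁², {x₃,x₁} = 0. Fix a, d ∈ k and let φ be the graded Poisson automorphism with φ(x₁) = −x₁, φ(x₂) = a·x₁ + x₂, φ(x₃) = d·x₁ + x₃, and let G = ⟨φ⟩. Then the invariant subalgebra P^G equals the k-subalgebra generated by y₁ = x₁², y₂ = (a/2)x₁ + x₂, y₃ = (d/2)x₁ + x₃, and these generators satisfy {y₁,y₂} = 0, {y₂,y₃} = 3y₁, {y₃,y₁} = 0. -/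
/-!
The automorphism `φ` is conjugate to the reflection `σ : x₁ ↦ -x₁` by the shear
`T : x₂ ↦ (a/2)x₁ + x₂, x₃ ↦ (d/2)x₁ + x₃`, i.e. `φ ∘ T = T ∘ σ`, so `P^φ = T(P^σ)`.
Since `σ` multiplies a monomial by `(-1)^(exponent of x₁)`, the average `(f + σ f)/2` keeps
exactly the monomials of even `x₁`-degree, hence `P^σ = k[x₁², x₂, x₃]` and
`P^φ = k[T x₁², T x₂, T x₃] = k[y₁, y₂, y₃]`. The brackets are a direct computation.
-/

open MvPolynomial

theorem forall_mem_zpowers_smul_eq_iff {G α : Type*} [Group G] [MulAction G α] {g : G} {x : α} :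
    (∀ h ∈ Subgroup.zpowers g, h • x = x) ↔ g • x = x := by
  simp only [← MulAction.mem_stabilizer_iff, ← SetLike.le_def, Subgroup.zpowers_le]

theorem Function.Semiconj.image_fixedPoints {α β : Type*} {T : α ≃ β} {σ : α → α} {φ : β → β}
    (h : Semiconj T σ φ) : T '' fixedPoints σ = fixedPoints φ := by
  refine h.mapsTo_fixedPoints.image_subset.antisymm fun y hy => ⟨T.symm y, ?_, T.apply_symm_apply y⟩
  refine T.injective ?_
  rw [h, T.apply_symm_apply, hy]

namespace MvPolynomial

section NegVar

variable {R ι : Type*} [CommRing R]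

theorem monomial_erase_mem_supported (i : ι) (m : ι →₀ ℕ) (c : R) :
    monomial (m.erase i) c ∈ supported R {i}ᶜ := by
  rw [mem_supported]
  intro j hj
  obtain ⟨d, hd, hjd⟩ := (mem_vars_iff_mem_support _).mp hj
  rw [Finset.mem_singleton.mp (support_monomial_subset hd)] at hjd
  exact fun hji => Finsupp.mem_support_iff.mp hjd (hji ▸ Finsupp.erase_same)

theorem monomial_eq_monomial_erase_mul (i : ι) (m : ι →₀ ℕ) (c : R) :
    monomial m c = monomial (m.erase i) c * X i ^ m i := by
  conv_lhs => rw [← Finsupp.erase_add_single i m]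
  rw [monomial_add_single]

variable [DecidableEq ι]

noncomputable def negVar (i : ι) : MvPolynomial ι R →ₐ[R] MvPolynomial ι R :=
  aeval (Function.update X i (-X i))

@[simp]
theorem negVar_X_self (i : ι) : negVar i (X i : MvPolynomial ι R) = -X i := by
  simp [negVar]

theorem negVar_X_of_ne {i j : ι} (h : j ≠ i) : negVar i (X j : MvPolynomial ι R) = X j := by
  simp [negVar, h]

theorem negVar_apply_of_mem_supported {i : ι} {p : MvPolynomial ι R}
    (hp : p ∈ supported R {i}ᶜ) : negVar i p = p := by
  refine AlgHom.adjoin_le_equalizer (negVar i) (AlgHom.id R _) ?_ hp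
  rintro _ ⟨j, hj, rfl⟩
  exact negVar_X_of_ne hj

theorem negVar_monomial (i : ι) (m : ι →₀ ℕ) (c : R) :
    negVar i (monomial m c) = (-1) ^ m i * monomial m c := by
  rw [monomial_eq_monomial_erase_mul i, map_mul, map_pow, negVar_X_self,
    negVar_apply_of_mem_supported (monomial_erase_mem_supported i m c), neg_pow]
  ring

theorem add_negVar_mem_adjoin (i : ι) (p : MvPolynomial ι R) :
    p + negVar i p ∈ Algebra.adjoin R (insert (X i ^ 2) (X '' {i}ᶜ)) := by
  set A := Algebra.adjoin R (insert (X i ^ 2) (X '' {i}ᶜ) : Set (MvPolynomial ι R))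
  induction p using MvPolynomial.induction_on' with
  | monomial m c =>
    rw [negVar_monomial]
    rcases Nat.even_or_odd' (m i) with ⟨t, ht | ht⟩
    · have hmem : monomial m c ∈ A := by
        rw [monomial_eq_monomial_erase_mul i, ht, pow_mul]
        exact mul_mem (Algebra.adjoin_mono (Set.subset_insert _ _)
          (monomial_erase_mem_supported i m c))
          (pow_mem (Algebra.subset_adjoin (Set.mem_insert _ _)) t)
      rw [ht, pow_mul, neg_one_sq, one_pow, one_mul]
      exact add_mem hmem hmem
    · rw [ht, pow_succ, pow_mul, neg_one_sq, one_pow, one_mul, neg_one_mul, add_neg_cancel]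
      exact zero_mem A
  | add q r hq hr =>
    rw [map_add, add_add_add_comm]
    exact add_mem hq hr

theorem negVar_apply_eq_self_iff [Invertible (2 : R)] {i : ι} {p : MvPolynomial ι R} :
    negVar i p = p ↔ p ∈ Algebra.adjoin R (insert (X i ^ 2) (X '' {i}ᶜ)) := by
  constructor
  · intro hp
    have := Subalgebra.smul_mem _ (add_negVar_mem_adjoin i p) (⅟2 : R)
    rwa [hp, ← two_smul R, smul_smul, invOf_mul_self, one_smul] at this
  · intro hp
    refine AlgHom.adjoin_le_equalizer (negVar i) (AlgHom.id R _) ?_ hp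
    rintro _ (rfl | ⟨j, hj, rfl⟩)
    · simp
    · exact negVar_X_of_ne hj

end NegVar

section Shear

variable {R : Type*} [CommRing R]

noncomputable def shear (a d : R) : MvPolynomial (Fin 3) R ≃ₐ[R] MvPolynomial (Fin 3) R :=
  AlgEquiv.ofAlgHom (aeval ![X 0, C a * X 0 + X 1, C d * X 0 + X 2])
    (aeval ![X 0, C (-a) * X 0 + X 1, C (-d) * X 0 + X 2])
    (by ext i : 1; fin_cases i <;> simp)
    (by ext i : 1; fin_cases i <;> simp)

@[simp]
theorem shear_X_zero (a d : R) : shear a d (X 0) = X 0 := by simp [shear]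

@[simp]
theorem shear_X_one (a d : R) : shear a d (X 1) = C a * X 0 + X 1 := by simp [shear]

@[simp]
theorem shear_X_two (a d : R) : shear a d (X 2) = C d * X 0 + X 2 := by simp [shear]

theorem shear_image_generators (a d : R) :
    shear a d '' {X 0 ^ 2, X 1, X 2} = {X 0 ^ 2, C a * X 0 + X 1, C d * X 0 + X 2} := by
  simp [Set.image_insert_eq]

theorem insert_X_zero_sq_image_X_compl :
    insert (X 0 ^ 2) (X '' {0}ᶜ) = ({X 0 ^ 2, X 1, X 2} : Set (MvPolynomial (Fin 3) R)) := by
  have : ({0}ᶜ : Set (Fin 3)) = {1, 2} := by ext j; fin_cases j <;> simp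
  rw [this, Set.image_insert_eq, Set.image_singleton]

theorem semiconj_shear_negVar {k : Type*} [Field k] [CharZero k] {a d : k}
    {φ : MvPolynomial (Fin 3) k ≃ₐ[k] MvPolynomial (Fin 3) k}
    (hφ0 : φ (X 0) = -X 0) (hφ1 : φ (X 1) = C a * X 0 + X 1) (hφ2 : φ (X 2) = C d * X 0 + X 2) :
    Function.Semiconj (shear (a / 2) (d / 2)) (negVar 0) φ := by
  have hC : ∀ c : k, φ (C c) = C c := φ.commutes
  have hhalf : ∀ c : k, (C c : MvPolynomial (Fin 3) k) = C (c / 2) + C (c / 2) := fun c => by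
    rw [← C_add, add_halves]
  have h : (shear (a / 2) (d / 2) : MvPolynomial (Fin 3) k →ₐ[k] MvPolynomial (Fin 3) k).comp
      (negVar 0) =
      (φ : MvPolynomial (Fin 3) k →ₐ[k] MvPolynomial (Fin 3) k).comp (shear (a / 2) (d / 2)) := by
    ext i : 1
    fin_cases i
    · simp [hφ0]
    · simp [negVar_X_of_ne, hC, hφ0, hφ1, hhalf a]
      ring
    · simp [negVar_X_of_ne, hC, hφ0, hφ2, hhalf d]
      ring
  exact DFunLike.congr_fun h

end Shear

end MvPolynomial

theorem stmt_16_general {k : Type*} [Field k] [CharZero k] (a d : k)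
    (φ : MvPolynomial (Fin 3) k ≃ₐ[k] MvPolynomial (Fin 3) k)
    (hφ0 : φ (X 0) = -X 0)
    (hφ1 : φ (X 1) = C a * X 0 + X 1)
    (hφ2 : φ (X 2) = C d * X 0 + X 2) :
    {f : MvPolynomial (Fin 3) k | ∀ ψ ∈ Subgroup.zpowers φ, ψ f = f} =
      ↑(Algebra.adjoin k ({X 0 ^ 2, C (a / 2) * X 0 + X 1, C (d / 2) * X 0 + X 2} :
          Set (MvPolynomial (Fin 3) k))) ∧
    jacBracket 0 (3 * X 0 ^ 2) 0 (X 0 ^ 2) (C (a / 2) * X 0 + X 1) = 0 ∧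
    jacBracket 0 (3 * X 0 ^ 2) 0 (C (a / 2) * X 0 + X 1) (C (d / 2) * X 0 + X 2) =
      3 * (X 0 ^ 2) ∧
    jacBracket 0 (3 * X 0 ^ 2) 0 (C (d / 2) * X 0 + X 2) (X 0 ^ 2) = 0 := by
  refine ⟨?_, ?_, ?_, ?_⟩
  · have : Invertible (2 : k) := invertibleOfNonzero two_ne_zero
    calc {f | ∀ ψ ∈ Subgroup.zpowers φ, ψ f = f}
        = Function.fixedPoints φ := Set.ext fun f => forall_mem_zpowers_smul_eq_iff
      _ = shear (a / 2) (d / 2) '' Function.fixedPoints (negVar 0) :=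
        (semiconj_shear_negVar hφ0 hφ1 hφ2).image_fixedPoints.symm
      _ = shear (a / 2) (d / 2) ''
          ↑(Algebra.adjoin k ({X 0 ^ 2, X 1, X 2} : Set (MvPolynomial (Fin 3) k))) := by
        rw [← insert_X_zero_sq_image_X_compl]
        exact congrArg _ (Set.ext fun p => negVar_apply_eq_self_iff)
      _ = _ := by
        rw [← shear_image_generators]
        exact congrArg SetLike.coe
          (Algebra.adjoin_image k (shear (a / 2) (d / 2)).toAlgHom _).symm
  all_goals simp [jacBracket, pderiv_X]

/-- For the bracket `{x₁,x₂} = 0`, `{x₂,x₃} = 3x₁²`, `{x₃,x₁} = 0` and the graded Poisson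
automorphism `φ : x₁ ↦ −x₁, x₂ ↦ a·x₁ + x₂, x₃ ↦ d·x₁ + x₃` with `G = ⟨φ⟩`, the invariant
subalgebra `P^G` is generated by `y₁ = x₁²`, `y₂ = (a/2)x₁ + x₂`, `y₃ = (d/2)x₁ + x₃`, and
`{y₁,y₂} = 0`, `{y₂,y₃} = 3y₁`, `{y₃,y₁} = 0`. -/
theorem stmt_16 {k : Type*} [Field k] [IsAlgClosed k] [CharZero k] (a d : k)
    (φ : MvPolynomial (Fin 3) k ≃ₐ[k] MvPolynomial (Fin 3) k)
    (hφ0 : φ (X 0) = -X 0)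
    (hφ1 : φ (X 1) = C a * X 0 + X 1)
    (hφ2 : φ (X 2) = C d * X 0 + X 2)
    (hbr : ∀ f g, φ (jacBracket 0 (3 * X 0 ^ 2) 0 f g) =
      jacBracket 0 (3 * X 0 ^ 2) 0 (φ f) (φ g)) :
    {f : MvPolynomial (Fin 3) k | ∀ ψ ∈ Subgroup.zpowers φ, ψ f = f} =
      ↑(Algebra.adjoin k ({X 0 ^ 2, C (a / 2) * X 0 + X 1, C (d / 2) * X 0 + X 2} :
          Set (MvPolynomial (Fin 3) k))) ∧
    jacBracket 0 (3 * X 0 ^ 2) 0 (X 0 ^ 2) (C (a / 2) * X 0 + X 1) = 0 ∧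
    jacBracket 0 (3 * X 0 ^ 2) 0 (C (a / 2) * X 0 + X 1) (C (d / 2) * X 0 + X 2) =
      3 * (X 0 ^ 2) ∧
    jacBracket 0 (3 * X 0 ^ 2) 0 (C (d / 2) * X 0 + X 2) (X 0 ^ 2) = 0 :=
  stmt_16_general a d φ hφ0 hφ1 hφ2
end

section
/- Equip P = k[x₁,x₂,x₃] with the Poisson bracket {x₁,x₂} = x₁x₂, {x₂,x₃} = 3x₁² + 2x₁x₂ + x₂x₃, {x₃,x₁} = x₁² + x₁x₃. Let φ be the graded Poisson automorphism with φ(x₁) = −x₁, φ(x₂) = x₂, φ(x₃) = 2x₁ + x₃, and let G = ⟨φ⟩. Then the invariant subalgebra P^G equals the k-subalgebra generated by y₁ = x₂, y₂ = x₁ + x₃, y₃ = x₁², and these generators satisfy {y₁,y₂} = y₁y₂ + 3y₃, {y₂,y₃} = 2y₂y₃, {y₃,y₁} = 2y₁y₃. -/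
open MvPolynomial

/-!
After the change of variables `x₃ ↦ x₁ + x₃`, the automorphism `φ` becomes the reflection
`x₁ ↦ -x₁`. A polynomial fixed by the reflection has no monomial of odd degree in `x₁` (this is
where `2 ≠ 0` enters), so it is a polynomial in `x₁², x₂, x₃`; undoing the change of variables
gives the generators `x₂, x₁ + x₃, x₁²`. Fixing `φ` is the same as fixing all of `⟨φ⟩`.
-/

namespace MvPolynomial

variable {ι R : Type*} [CommRing R]

theorem monomial_mem_adjoin_of_even (i : ι) {m : ι →₀ ℕ} (hm : Even (m i)) (c : R) :
    monomial m c ∈ Algebra.adjoin R (insert (X i ^ 2) (X '' {i}ᶜ)) := by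
  rw [monomial_eq, Finsupp.prod, ← algebraMap_eq]
  refine Subalgebra.mul_mem _ (Subalgebra.algebraMap_mem _ c) (Subalgebra.prod_mem _ fun j _ => ?_)
  rcases eq_or_ne j i with rfl | hj
  · obtain ⟨e, he⟩ := hm.two_dvd
    rw [he, pow_mul]
    exact Subalgebra.pow_mem _ (Algebra.subset_adjoin (Set.mem_insert _ _)) e
  · exact Subalgebra.pow_mem _
      (Algebra.subset_adjoin (Set.mem_insert_of_mem _ (Set.mem_image_of_mem X hj))) _

variable [DecidableEq ι]

noncomputable def negX (i : ι) : MvPolynomial ι R →ₐ[R] MvPolynomial ι R :=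
  aeval (Function.update X i (-X i))

@[simp]
theorem negX_X (i l : ι) : negX i (X l : MvPolynomial ι R) = Function.update X i (-X i) l :=
  aeval_X _ _

theorem negX_monomial (i : ι) (m : ι →₀ ℕ) (c : R) :
    negX i (monomial m c) = (-1 : R) ^ m i • monomial m c := by
  have hsign : Function.update X i (-X i) =
      fun j => Function.update (1 : ι → R) i (-1) j • (X j : MvPolynomial ι R) := by
    ext1 j
    rcases eq_or_ne j i with rfl | hj
    · simp
    · simp [Function.update_of_ne hj]
  have hprod : ∏ j ∈ m.support, Function.update (1 : ι → R) i (-1) j ^ m j = (-1) ^ m i := by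
    by_cases hi : i ∈ m.support
    · rw [Finset.prod_eq_single i (fun j _ hj => by simp [Function.update_of_ne hj]) (absurd hi)]
      simp
    · rw [Finsupp.notMem_support_iff.1 hi, pow_zero]
      exact Finset.prod_eq_one fun j hj => by
        simp [Function.update_of_ne (ne_of_mem_of_not_mem hj hi)]
  rw [negX, aeval_monomial, hsign, Finsupp.prod]
  simp_rw [smul_pow]
  rw [Finset.prod_smul, hprod, monomial_eq, Finsupp.prod, algebraMap_eq, mul_smul_comm]

theorem coeff_negX (i : ι) (m : ι →₀ ℕ) (f : MvPolynomial ι R) :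
    coeff m (negX i f) = (-1) ^ m i * coeff m f := by
  induction f using MvPolynomial.induction_on' with
  | monomial n c =>
    rw [negX_monomial, coeff_smul, coeff_monomial, smul_eq_mul]
    split_ifs with h
    · rw [h]
    · rw [mul_zero, mul_zero]
  | add p q hp hq => rw [map_add, coeff_add, coeff_add, hp, hq, mul_add]

theorem mem_adjoin_of_negX_eq [NoZeroDivisors R] [CharZero R] {i : ι} {f : MvPolynomial ι R}
    (hf : negX i f = f) : f ∈ Algebra.adjoin R (insert (X i ^ 2) (X '' {i}ᶜ)) := by
  have hodd : ∀ m : ι →₀ ℕ, Odd (m i) → coeff m f = 0 := fun m hm => by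
    rw [← CharZero.eq_neg_self_iff, ← neg_one_mul, ← hm.neg_one_pow, ← coeff_negX, hf]
  rw [f.as_sum]
  refine Subalgebra.sum_mem _ fun m hm => monomial_mem_adjoin_of_even i ?_ _
  exact Nat.not_odd_iff_even.1 fun hm_odd => mem_support_iff.1 hm (hodd m hm_odd)

noncomputable def transvectionHom (i j : ι) (c : R) : MvPolynomial ι R →ₐ[R] MvPolynomial ι R :=
  aeval (Function.update X j (X j + C c * X i))

theorem transvectionHom_zero (i j : ι) : transvectionHom i j (0 : R) = AlgHom.id R _ := by
  ext1 l
  rcases eq_or_ne l j with rfl | hl <;> simp [transvectionHom, *]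

theorem transvectionHom_comp {i j : ι} (hij : i ≠ j) (c d : R) :
    (transvectionHom i j c).comp (transvectionHom i j d) = transvectionHom i j (c + d) := by
  ext1 l
  rcases eq_or_ne l j with rfl | hl
  · simp [transvectionHom, Function.update_of_ne hij]
    ring
  · simp [transvectionHom, Function.update_of_ne hl]

noncomputable def transvection {i j : ι} (hij : i ≠ j) (c : R) :
    MvPolynomial ι R ≃ₐ[R] MvPolynomial ι R :=
  AlgEquiv.ofAlgHom (transvectionHom i j c) (transvectionHom i j (-c))
    (by rw [transvectionHom_comp hij, add_neg_cancel, transvectionHom_zero])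
    (by rw [transvectionHom_comp hij, neg_add_cancel, transvectionHom_zero])

@[simp]
theorem transvection_X {i j : ι} (hij : i ≠ j) (c : R) (l : ι) :
    transvection hij c (X l) = Function.update X j (X j + C c * X i) l :=
  aeval_X _ _

end MvPolynomial

theorem AlgEquiv.forall_mem_zpowers_apply_eq_iff {R A : Type*} [CommSemiring R] [Semiring A]
    [Algebra R A] (φ : A ≃ₐ[R] A) (a : A) : (∀ ψ ∈ Subgroup.zpowers φ, ψ a = a) ↔ φ a = a := by
  simpa [Subgroup.forall_mem_zpowers, AlgEquiv.smul_def] using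
    MulAction.mem_fixedBy_zpowers_iff_mem_fixedBy (g := φ) (a := a)

theorem map_adjoin_even_transvection_le {k : Type*} [CommRing k] :
    (Algebra.adjoin k (insert (X 0 ^ 2) (X '' {0}ᶜ))).map
        (transvection (show (0 : Fin 3) ≠ 2 by decide) (1 : k)).toAlgHom ≤
      Algebra.adjoin k {X 1, X 0 + X 2, X 0 ^ 2} := by
  rw [AlgHom.map_adjoin]
  refine Algebra.adjoin_mono ?_
  rintro _ ⟨p, rfl | ⟨j, hj, rfl⟩, rfl⟩
  · simp
  · fin_cases j
    · exact absurd rfl hj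
    · simp
    · simp [add_comm]

theorem stmt_17_general {k : Type*} [Field k] [CharZero k]
    (φ : MvPolynomial (Fin 3) k ≃ₐ[k] MvPolynomial (Fin 3) k)
    (hφ0 : φ (X 0) = -X 0)
    (hφ1 : φ (X 1) = X 1)
    (hφ2 : φ (X 2) = 2 * X 0 + X 2) :
    {f : MvPolynomial (Fin 3) k | ∀ ψ ∈ Subgroup.zpowers φ, ψ f = f} =
      ↑(Algebra.adjoin k ({X 1, X 0 + X 2, X 0 ^ 2} : Set (MvPolynomial (Fin 3) k))) ∧
    jacBracket (X 0 * X 1) (3 * X 0 ^ 2 + 2 * X 0 * X 1 + X 1 * X 2)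
        (X 0 ^ 2 + X 0 * X 2) (X 1) (X 0 + X 2) =
      (X 1 * (X 0 + X 2) + 3 * X 0 ^ 2 : MvPolynomial (Fin 3) k) ∧
    jacBracket (X 0 * X 1) (3 * X 0 ^ 2 + 2 * X 0 * X 1 + X 1 * X 2)
        (X 0 ^ 2 + X 0 * X 2) (X 0 + X 2) (X 0 ^ 2) =
      (2 * ((X 0 + X 2) * X 0 ^ 2) : MvPolynomial (Fin 3) k) ∧
    jacBracket (X 0 * X 1) (3 * X 0 ^ 2 + 2 * X 0 * X 1 + X 1 * X 2)
        (X 0 ^ 2 + X 0 * X 2) (X 0 ^ 2) (X 1) =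
      (2 * (X 1 * X 0 ^ 2) : MvPolynomial (Fin 3) k) := by
  refine ⟨?_, by simp [jacBracket, pderiv_X]; ring, by simp [jacBracket, pderiv_X]; ring,
    by simp [jacBracket, pderiv_X]; ring⟩
  set T := transvection (show (0 : Fin 3) ≠ 2 by decide) (1 : k)
  have hsemiconj : φ.toAlgHom.comp T.toAlgHom = T.toAlgHom.comp (negX 0) := by
    ext1 l
    fin_cases l
    · simp [T, hφ0]
    · simp [T, hφ1]
    · simp [T, hφ0, hφ2]
      ring
  have hgen_fixed : Algebra.adjoin k {X 1, X 0 + X 2, X 0 ^ 2} ≤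
      AlgHom.equalizer φ.toAlgHom (AlgHom.id k _) := by
    refine Algebra.adjoin_le ?_
    rintro _ (rfl | rfl | rfl)
    · exact hφ1
    · change φ (X 0 + X 2) = X 0 + X 2
      rw [map_add, hφ0, hφ2]
      ring
    · change φ (X 0 ^ 2) = X 0 ^ 2
      rw [map_pow, hφ0, neg_sq]
  ext f
  rw [Set.mem_ofPred_eq, AlgEquiv.forall_mem_zpowers_apply_eq_iff, SetLike.mem_coe]
  refine ⟨fun hf => ?_, fun hf => hgen_fixed hf⟩
  obtain ⟨g, rfl⟩ := T.surjective f
  have hg : negX 0 g = g := T.injective ((AlgHom.congr_fun hsemiconj g).symm.trans hf)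
  exact map_adjoin_even_transvection_le ⟨g, mem_adjoin_of_negX_eq hg, rfl⟩

/-- For the bracket `{x₁,x₂} = x₁x₂`, `{x₂,x₃} = 3x₁² + 2x₁x₂ + x₂x₃`,
`{x₃,x₁} = x₁² + x₁x₃` and the graded Poisson automorphism
`φ : x₁ ↦ −x₁, x₂ ↦ x₂, x₃ ↦ 2x₁ + x₃` with `G = ⟨φ⟩`, the invariant subalgebra `P^G` is
generated by `y₁ = x₂`, `y₂ = x₁ + x₃`, `y₃ = x₁²`, and `{y₁,y₂} = y₁y₂ + 3y₃`,
`{y₂,y₃} = 2y₂y₃`, `{y₃,y₁} = 2y₁y₃`. -/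
theorem stmt_17 {k : Type*} [Field k] [IsAlgClosed k] [CharZero k]
    (φ : MvPolynomial (Fin 3) k ≃ₐ[k] MvPolynomial (Fin 3) k)
    (hφ0 : φ (X 0) = -X 0)
    (hφ1 : φ (X 1) = X 1)
    (hφ2 : φ (X 2) = 2 * X 0 + X 2)
    (hbr : ∀ f g,
      φ (jacBracket (X 0 * X 1) (3 * X 0 ^ 2 + 2 * X 0 * X 1 + X 1 * X 2)
          (X 0 ^ 2 + X 0 * X 2) f g) =
        jacBracket (X 0 * X 1) (3 * X 0 ^ 2 + 2 * X 0 * X 1 + X 1 * X 2)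
          (X 0 ^ 2 + X 0 * X 2) (φ f) (φ g)) :
    {f : MvPolynomial (Fin 3) k | ∀ ψ ∈ Subgroup.zpowers φ, ψ f = f} =
      ↑(Algebra.adjoin k ({X 1, X 0 + X 2, X 0 ^ 2} : Set (MvPolynomial (Fin 3) k))) ∧
    jacBracket (X 0 * X 1) (3 * X 0 ^ 2 + 2 * X 0 * X 1 + X 1 * X 2)
        (X 0 ^ 2 + X 0 * X 2) (X 1) (X 0 + X 2) =
      (X 1 * (X 0 + X 2) + 3 * X 0 ^ 2 : MvPolynomial (Fin 3) k) ∧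
    jacBracket (X 0 * X 1) (3 * X 0 ^ 2 + 2 * X 0 * X 1 + X 1 * X 2)
        (X 0 ^ 2 + X 0 * X 2) (X 0 + X 2) (X 0 ^ 2) =
      (2 * ((X 0 + X 2) * X 0 ^ 2) : MvPolynomial (Fin 3) k) ∧
    jacBracket (X 0 * X 1) (3 * X 0 ^ 2 + 2 * X 0 * X 1 + X 1 * X 2)
        (X 0 ^ 2 + X 0 * X 2) (X 0 ^ 2) (X 1) =
      (2 * (X 1 * X 0 ^ 2) : MvPolynomial (Fin 3) k) :=
  stmt_17_general φ hφ0 hφ1 hφ2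
end

section
/- Equip P = k[x₁,x₂,x₃] with the Poisson bracket {x₁,x₂} = 0, {x₂,x₃} = 2x₁x₂ + x₂², {x₃,x₁} = x₁² + 2x₁x₂. Fix a, b ∈ k and let φ₁, φ₂ be the graded Poisson automorphisms with φ₁(x₁) = −x₂, φ₁(x₂) = −x₁, φ₁(x₃) = a·x₁ + a·x₂ + x₃, and φ₂(x₁) = −x₁, φ₂(x₂) = x₁ + x₂, φ₂(x₃) = b·x₁ + x₃. Then the group G = ⟨φ₁,φ₂⟩ satisfies φ₁² = φ₂² = (φ₁φ₂)³ = id and φ₁φ₂ ≠ φ₂φ₁, so G is isomorphic to the symmetric group S₃; moreover the invariant subalgebra P^G equals the k-subalgebra generated by y₁ = ((a+b)/3)x₁ + ((2a−b)/3)x₂ + x₃, y₂ = x₁² + x₂² + x₁x₂, y₃ = 2x₁³ + 3x₁²x₂ − 3x₁x₂² − 2x₂³, and these generators satisfy {y₁,y₂} = y₃, {y₂,y₃} = 0, {y₃,y₁} = −6y₂². -/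
/-!
Put z₀ = (y₁ + 2x₁ + x₂)/3, z₁ = (y₁ − x₁ + x₂)/3, z₂ = (y₁ − x₁ − 2x₂)/3. These linear forms are a
basis of P₁ (z₀ − z₁ = x₁, z₁ − z₂ = x₂, z₀ + z₁ + z₂ = y₁), and φ₁ swaps z₀ and z₂ while φ₂ swaps
z₀ and z₁. So in the coordinates zᵢ the group G is S₃ permuting the variables, and P^G is the
algebra of symmetric polynomials in the zᵢ, generated by e₁, e₂, e₃. Since y₁ = e₁, y₂ = e₁² − 3e₂
and y₃ = 27e₃ + 2e₁³ − 9e₁e₂, the yᵢ generate the same algebra. The brackets are computed directly.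
-/

open MvPolynomial

/-- The bracket `{x₁,x₂} = 0`, `{x₂,x₃} = 2x₁x₂ + x₂²`, `{x₃,x₁} = x₁² + 2x₁x₂`. -/
noncomputable def br18 {k : Type*} [Field k] :
    MvPolynomial (Fin 3) k → MvPolynomial (Fin 3) k → MvPolynomial (Fin 3) k :=
  jacBracket 0 (2 * X 0 * X 1 + X 1 ^ 2) (X 0 ^ 2 + 2 * X 0 * X 1)

noncomputable def y18_1 {k : Type*} [Field k] (a b : k) : MvPolynomial (Fin 3) k :=
  C ((a + b) / 3) * X 0 + C ((2 * a - b) / 3) * X 1 + X 2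

noncomputable def y18_2 {k : Type*} [Field k] : MvPolynomial (Fin 3) k :=
  X 0 ^ 2 + X 1 ^ 2 + X 0 * X 1

noncomputable def y18_3 {k : Type*} [Field k] : MvPolynomial (Fin 3) k :=
  2 * X 0 ^ 3 + 3 * X 0 ^ 2 * X 1 - 3 * X 0 * X 1 ^ 2 - 2 * X 1 ^ 3

open Equiv Equiv.Perm Subgroup

namespace MvPolynomial

variable {σ R : Type*} [CommSemiring R]

variable (σ R) in
noncomputable def renamePermHom : Perm σ →* (MvPolynomial σ R ≃ₐ[R] MvPolynomial σ R) where
  toFun e := renameEquiv R e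
  map_one' := renameEquiv_refl R
  map_mul' e f := (renameEquiv_trans R f e).symm

@[simp]
lemma renamePermHom_apply (e : Perm σ) (p : MvPolynomial σ R) :
    renamePermHom σ R e p = rename e p := rfl

lemma renamePermHom_injective [Nontrivial R] : Function.Injective (renamePermHom σ R) := by
  intro e f h
  ext i
  simpa using DFunLike.congr_fun h (X i)

lemma symmetricSubalgebra_eq_adjoin_esymm {R : Type*} [CommRing R] (n : ℕ) :
    symmetricSubalgebra (Fin n) R =
      Algebra.adjoin R (Set.range fun i : Fin n ↦ esymm (Fin n) R (i + 1)) := by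
  refine le_antisymm (fun p hp ↦ ?_) (Algebra.adjoin_le ?_)
  · obtain ⟨q, hq⟩ := esymmAlgHom_surjective R (Fintype.card_fin n).le ⟨p, hp⟩
    rw [Algebra.adjoin_range_eq_range_aeval]
    exact ⟨q, (esymmAlgHom_apply q).symm.trans (congrArg Subtype.val hq)⟩
  · rintro _ ⟨i, rfl⟩
    exact esymm_isSymmetric _ _ _

lemma esymm_fin_three_two : esymm (Fin 3) R 2 = X 0 * X 1 + X 0 * X 2 + X 1 * X 2 := by
  rw [esymm, show Finset.powersetCard 2 (Finset.univ : Finset (Fin 3)) = {{0, 1}, {0, 2}, {1, 2}}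
    by decide, Finset.sum_insert (by decide), Finset.sum_pair (by decide)]
  simp [add_assoc]

lemma esymm_fin_three_three : esymm (Fin 3) R 3 = X 0 * X 1 * X 2 := by
  rw [esymm, show Finset.powersetCard 3 (Finset.univ : Finset (Fin 3)) = {{0, 1, 2}} by decide]
  simp [mul_assoc]

lemma pderiv_ofNat (i : σ) (n : ℕ) [n.AtLeastTwo] :
    pderiv i (no_index (OfNat.ofNat n) : MvPolynomial σ R) = 0 := by
  rw [← map_ofNat C n, pderiv_C]

end MvPolynomial

section

variable {k A : Type*} [Field k] [CharZero k] [CommRing A] [Algebra k A]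

lemma algebraMap_inv_ofNat_mul (n : ℕ) [n.AtLeastTwo] :
    algebraMap k A (OfNat.ofNat n : k)⁻¹ * OfNat.ofNat n = 1 := by
  rw [← map_ofNat (algebraMap k A), ← map_mul, inv_mul_cancel₀ (NeZero.ne _), map_one]

lemma Algebra.adjoin_triangular_eq (x y z : A) :
    Algebra.adjoin k {x, x ^ 2 - 3 * y, 27 * z + 2 * x ^ 3 - 9 * x * y} =
      Algebra.adjoin k {x, y, z} := by
  simp only [le_antisymm_iff, Algebra.adjoin_le_iff, Set.insert_subset_iff,
    Set.singleton_subset_iff, SetLike.mem_coe]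
  constructor
  · have hx : x ∈ Algebra.adjoin k {x, y, z} := Algebra.subset_adjoin (by simp)
    have hy : y ∈ Algebra.adjoin k {x, y, z} := Algebra.subset_adjoin (by simp)
    have hz : z ∈ Algebra.adjoin k {x, y, z} := Algebra.subset_adjoin (by simp)
    exact ⟨hx, sub_mem (pow_mem hx 2) (mul_mem (ofNat_mem _ 3) hy),
      sub_mem (add_mem (mul_mem (ofNat_mem _ 27) hz) (mul_mem (ofNat_mem _ 2) (pow_mem hx 3)))
        (mul_mem (mul_mem (ofNat_mem _ 9) hx) hy)⟩
  · set S := Algebra.adjoin k {x, x ^ 2 - 3 * y, 27 * z + 2 * x ^ 3 - 9 * x * y}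
    have hx : x ∈ S := Algebra.subset_adjoin (by simp)
    have hq : x ^ 2 - 3 * y ∈ S := Algebra.subset_adjoin (by simp)
    have hr : 27 * z + 2 * x ^ 3 - 9 * x * y ∈ S := Algebra.subset_adjoin (by simp)
    have hy : y ∈ S := by
      have : y = algebraMap k A 3⁻¹ * (x ^ 2 - (x ^ 2 - 3 * y)) := by
        linear_combination (-y) * algebraMap_inv_ofNat_mul (k := k) (A := A) 3
      exact this ▸ mul_mem (algebraMap_mem _ _) (sub_mem (pow_mem hx 2) hq)
    have hz : z ∈ S := by
      have : z = algebraMap k A 27⁻¹ *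
          (27 * z + 2 * x ^ 3 - 9 * x * y - 2 * x ^ 3 + 9 * x * y) := by
        linear_combination (-z) * algebraMap_inv_ofNat_mul (k := k) (A := A) 27
      exact this ▸ mul_mem (algebraMap_mem _ _) (add_mem (sub_mem hr
        (mul_mem (ofNat_mem _ 2) (pow_mem hx 3))) (mul_mem (mul_mem (ofNat_mem _ 9) hx) hy))
    exact ⟨hx, hy, hz⟩

end

lemma Equiv.Perm.closure_swap_zero_two_swap_zero_one :
    closure ({swap 0 2, swap 0 1} : Set (Perm (Fin 3))) = ⊤ := by
  have h3 : IsThreeCycle (swap (0 : Fin 3) 2 * swap 0 1) :=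
    isThreeCycle_swap_mul_swap_same (by decide) (by decide) (by decide)
  refine eq_top_iff.2 ((closure_prime_cycle_swap (τ := swap 0 1) (by decide) h3.isCycle
    (Finset.eq_univ_of_card _ h3.card_support) ⟨0, 1, by decide, rfl⟩).ge.trans ?_)
  rw [closure_le, Set.insert_subset_iff, Set.singleton_subset_iff]
  exact ⟨mul_mem (subset_closure (by simp)) (subset_closure (by simp)), subset_closure (by simp)⟩

section

variable {k : Type*} [Field k] [CharZero k] (a b : k)

lemma C_inv_three_mul_three : C (3⁻¹ : k) * (3 : MvPolynomial (Fin 3) k) = 1 :=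
  algebraMap_inv_ofNat_mul 3

-- Expresses a polynomial in x₁, x₂, x₃ in the coordinates z₀, z₁, z₂, renamed `X 0, X 1, X 2`.
noncomputable def permCoords : MvPolynomial (Fin 3) k ≃ₐ[k] MvPolynomial (Fin 3) k :=
  AlgEquiv.ofAlgHom
    (aeval ![X 0 - X 1, X 1 - X 2,
      X 0 + X 1 + X 2 - C ((a + b) / 3) * (X 0 - X 1) - C ((2 * a - b) / 3) * (X 1 - X 2)])
    (aeval ![C 3⁻¹ * (2 * X 0 + X 1 + y18_1 a b), C 3⁻¹ * (X 1 - X 0 + y18_1 a b),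
      C 3⁻¹ * (-X 0 - 2 * X 1 + y18_1 a b)])
    (algHom_ext fun i ↦ by
      fin_cases i <;> simp [y18_1, map_ofNat] <;>
        [linear_combination X 0 * C_inv_three_mul_three (k := k);
         linear_combination X 1 * C_inv_three_mul_three (k := k);
         linear_combination X 2 * C_inv_three_mul_three (k := k)])
    (algHom_ext fun i ↦ by
      fin_cases i <;> simp [y18_1] <;>
        [linear_combination X 0 * C_inv_three_mul_three (k := k);
         linear_combination X 1 * C_inv_three_mul_three (k := k);
         linear_combination X 2 * C_inv_three_mul_three (k := k)])

lemma permCoords_apply (p : MvPolynomial (Fin 3) k) :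
    permCoords a b p = aeval ![X 0 - X 1, X 1 - X 2,
      X 0 + X 1 + X 2 - C ((a + b) / 3) * (X 0 - X 1) - C ((2 * a - b) / 3) * (X 1 - X 2)] p :=
  rfl

noncomputable def permRep :
    Perm (Fin 3) →* (MvPolynomial (Fin 3) k ≃ₐ[k] MvPolynomial (Fin 3) k) :=
  (MulAut.conj (permCoords a b)⁻¹).toMonoidHom.comp (renamePermHom (Fin 3) k)

lemma permRep_apply (s : Perm (Fin 3)) :
    permRep a b s = (permCoords a b)⁻¹ * renamePermHom (Fin 3) k s * permCoords a b := by
  simp [permRep]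

lemma permRep_injective : Function.Injective (permRep a b) :=
  (MulAut.conj _).injective.comp renamePermHom_injective

lemma permRep_eq_iff {s : Perm (Fin 3)}
    {φ : MvPolynomial (Fin 3) k ≃ₐ[k] MvPolynomial (Fin 3) k} :
    permRep a b s = φ ↔ ∀ i, permCoords a b (φ (X i)) = rename s (permCoords a b (X i)) := by
  rw [permRep_apply, mul_assoc, inv_mul_eq_iff_eq_mul, eq_comm]
  refine ⟨fun h i ↦ DFunLike.congr_fun h (X i), fun h ↦ ?_⟩
  exact AlgEquiv.coe_toAlgHom_injective (algHom_ext h)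

lemma permRep_swap_zero_two {φ : MvPolynomial (Fin 3) k ≃ₐ[k] MvPolynomial (Fin 3) k}
    (h0 : φ (X 0) = -X 1) (h1 : φ (X 1) = -X 0) (h2 : φ (X 2) = C a * X 0 + C a * X 1 + X 2) :
    permRep a b (swap 0 2) = φ := by
  have ha : (C a : MvPolynomial (Fin 3) k) = C ((a + b) / 3) + C ((2 * a - b) / 3) := by
    rw [← C_add]; ring_nf
  refine (permRep_eq_iff a b).2 fun i ↦ ?_
  fin_cases i <;> simp [permCoords_apply, h0, h1, h2, swap_apply_of_ne_of_ne, ha]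
  ring

lemma permRep_swap_zero_one {φ : MvPolynomial (Fin 3) k ≃ₐ[k] MvPolynomial (Fin 3) k}
    (h0 : φ (X 0) = -X 0) (h1 : φ (X 1) = X 0 + X 1) (h2 : φ (X 2) = C b * X 0 + X 2) :
    permRep a b (swap 0 1) = φ := by
  have hb : (C b : MvPolynomial (Fin 3) k) = 2 * C ((a + b) / 3) - C ((2 * a - b) / 3) := by
    rw [← map_ofNat C, ← C_mul, ← C_sub]; ring_nf
  refine (permRep_eq_iff a b).2 fun i ↦ ?_
  fin_cases i <;> simp [permCoords_apply, h0, h1, h2, swap_apply_of_ne_of_ne, hb, map_ofNat]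
  ring

lemma forall_mem_range_permRep_apply_eq_iff {f : MvPolynomial (Fin 3) k} :
    (∀ ψ ∈ (permRep a b).range, ψ f = f) ↔ (permCoords a b f).IsSymmetric := by
  simp only [MonoidHom.mem_range, forall_exists_index, forall_apply_eq_imp_iff, permRep_apply,
    AlgEquiv.mul_apply, renamePermHom_apply, IsSymmetric]
  exact forall_congr' fun s ↦ (permCoords a b).symm_apply_eq

lemma permCoords_y18_1 : permCoords a b (y18_1 a b) = esymm (Fin 3) k 1 := by
  simp [permCoords_apply, y18_1, esymm_one, Fin.sum_univ_three]

lemma permCoords_y18_2 :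
    permCoords a b y18_2 = esymm (Fin 3) k 1 ^ 2 - 3 * esymm (Fin 3) k 2 := by
  simp [permCoords_apply, y18_2, esymm_one, Fin.sum_univ_three, esymm_fin_three_two]
  ring

lemma permCoords_y18_3 : permCoords a b y18_3 = 27 * esymm (Fin 3) k 3 +
    2 * esymm (Fin 3) k 1 ^ 3 - 9 * esymm (Fin 3) k 1 * esymm (Fin 3) k 2 := by
  simp [permCoords_apply, y18_3, esymm_one, Fin.sum_univ_three, esymm_fin_three_two,
    esymm_fin_three_three, map_ofNat]
  ring

lemma map_permCoords_adjoin_y18 :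
    (Algebra.adjoin k {y18_1 a b, y18_2, y18_3}).map (permCoords a b).toAlgHom =
      symmetricSubalgebra (Fin 3) k := by
  have hrange : Set.range (fun i : Fin 3 ↦ esymm (Fin 3) k (i + 1)) =
      {esymm (Fin 3) k 1, esymm (Fin 3) k 2, esymm (Fin 3) k 3} := by
    simp [Set.range, Fin.exists_fin_succ, Set.ext_iff, eq_comm]
  rw [← Algebra.adjoin_image, Set.image_insert_eq, Set.image_pair, AlgEquiv.coe_toAlgHom,
    permCoords_y18_1, permCoords_y18_2, permCoords_y18_3, Algebra.adjoin_triangular_eq,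
    symmetricSubalgebra_eq_adjoin_esymm, hrange]

lemma setOf_forall_mem_range_permRep_eq_adjoin :
    {f | ∀ ψ ∈ (permRep a b).range, ψ f = f} = Algebra.adjoin k {y18_1 a b, y18_2, y18_3} := by
  ext f
  rw [Set.mem_ofPred_eq, forall_mem_range_permRep_apply_eq_iff, ← mem_symmetricSubalgebra,
    ← map_permCoords_adjoin_y18 a b, Subalgebra.mem_map]
  simp

end

section

variable {k : Type*} [Field k] (a b : k)

lemma br18_y18_1_y18_2 : br18 (y18_1 a b) y18_2 = y18_3 := by
  simp [br18, jacBracket, y18_1, y18_2, y18_3]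
  ring

lemma br18_y18_2_y18_3 : br18 (y18_2 : MvPolynomial (Fin 3) k) y18_3 = 0 := by
  simp [br18, jacBracket, y18_2, y18_3, pderiv_ofNat]

lemma br18_y18_3_y18_1 : br18 y18_3 (y18_1 a b) = -6 * y18_2 ^ 2 := by
  simp [br18, jacBracket, y18_1, y18_2, y18_3, pderiv_ofNat]
  ring

end

theorem stmt_18_general {k : Type*} [Field k] [CharZero k] (a b : k)
    (φ₁ φ₂ : MvPolynomial (Fin 3) k ≃ₐ[k] MvPolynomial (Fin 3) k)
    (hφ₁0 : φ₁ (X 0) = -X 1) (hφ₁1 : φ₁ (X 1) = -X 0)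
    (hφ₁2 : φ₁ (X 2) = C a * X 0 + C a * X 1 + X 2)
    (hφ₂0 : φ₂ (X 0) = -X 0) (hφ₂1 : φ₂ (X 1) = X 0 + X 1)
    (hφ₂2 : φ₂ (X 2) = C b * X 0 + X 2) :
    φ₁ ^ 2 = 1 ∧ φ₂ ^ 2 = 1 ∧ (φ₁ * φ₂) ^ 3 = 1 ∧ φ₁ * φ₂ ≠ φ₂ * φ₁ ∧
    Nonempty ((Subgroup.closure {φ₁, φ₂} :
        Subgroup (MvPolynomial (Fin 3) k ≃ₐ[k] MvPolynomial (Fin 3) k)) ≃*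
      Equiv.Perm (Fin 3)) ∧
    {f : MvPolynomial (Fin 3) k | ∀ ψ ∈ Subgroup.closure {φ₁, φ₂}, ψ f = f} =
      ↑(Algebra.adjoin k ({y18_1 a b, y18_2, y18_3} : Set (MvPolynomial (Fin 3) k))) ∧
    br18 (y18_1 a b) y18_2 = y18_3 ∧
    br18 (y18_2 : MvPolynomial (Fin 3) k) y18_3 = 0 ∧
    br18 y18_3 (y18_1 a b) = -6 * y18_2 ^ 2 := by
  have h₁ := permRep_swap_zero_two a b hφ₁0 hφ₁1 hφ₁2
  have h₂ := permRep_swap_zero_one a b hφ₂0 hφ₂1 hφ₂2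
  have hG : closure {φ₁, φ₂} = (permRep a b).range := by
    rw [← h₁, ← h₂, ← Set.image_pair, ← MonoidHom.map_closure,
      closure_swap_zero_two_swap_zero_one, ← MonoidHom.range_eq_map]
  refine ⟨?_, ?_, ?_, ?_, ⟨(MulEquiv.subgroupCongr hG).trans
    (MonoidHom.ofInjective (permRep_injective a b)).symm⟩,
    hG ▸ setOf_forall_mem_range_permRep_eq_adjoin a b,
    br18_y18_1_y18_2 a b, br18_y18_2_y18_3, br18_y18_3_y18_1 a b⟩
  · rw [← h₁, ← map_pow, sq, swap_mul_self, map_one]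
  · rw [← h₂, ← map_pow, sq, swap_mul_self, map_one]
  · rw [← h₁, ← h₂, ← map_mul, ← map_pow, show (swap (0 : Fin 3) 2 * swap 0 1) ^ 3 = 1 by decide,
      map_one]
  · rw [← h₁, ← h₂, ← map_mul, ← map_mul, (permRep_injective a b).ne_iff]
    decide

/-- For the graded Poisson automorphisms `φ₁ : x₁ ↦ −x₂, x₂ ↦ −x₁, x₃ ↦ ax₁ + ax₂ + x₃` and
`φ₂ : x₁ ↦ −x₁, x₂ ↦ x₁ + x₂, x₃ ↦ bx₁ + x₃`, the group `G = ⟨φ₁,φ₂⟩` satisfies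
`φ₁² = φ₂² = (φ₁φ₂)³ = 1`, `φ₁φ₂ ≠ φ₂φ₁`, is isomorphic to `S₃`, and the invariant
subalgebra `P^G` is generated by `y₁, y₂, y₃` with `{y₁,y₂} = y₃`, `{y₂,y₃} = 0`,
`{y₃,y₁} = −6y₂²`. -/
theorem stmt_18 {k : Type*} [Field k] [IsAlgClosed k] [CharZero k] (a b : k)
    (φ₁ φ₂ : MvPolynomial (Fin 3) k ≃ₐ[k] MvPolynomial (Fin 3) k)
    (hφ₁0 : φ₁ (X 0) = -X 1) (hφ₁1 : φ₁ (X 1) = -X 0)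
    (hφ₁2 : φ₁ (X 2) = C a * X 0 + C a * X 1 + X 2)
    (hφ₂0 : φ₂ (X 0) = -X 0) (hφ₂1 : φ₂ (X 1) = X 0 + X 1)
    (hφ₂2 : φ₂ (X 2) = C b * X 0 + X 2)
    (hbr₁ : ∀ f g, φ₁ (br18 f g) = br18 (φ₁ f) (φ₁ g))
    (hbr₂ : ∀ f g, φ₂ (br18 f g) = br18 (φ₂ f) (φ₂ g)) :
    φ₁ ^ 2 = 1 ∧ φ₂ ^ 2 = 1 ∧ (φ₁ * φ₂) ^ 3 = 1 ∧ φ₁ * φ₂ ≠ φ₂ * φ₁ ∧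
    Nonempty ((Subgroup.closure {φ₁, φ₂} :
        Subgroup (MvPolynomial (Fin 3) k ≃ₐ[k] MvPolynomial (Fin 3) k)) ≃*
      Equiv.Perm (Fin 3)) ∧
    {f : MvPolynomial (Fin 3) k | ∀ ψ ∈ Subgroup.closure {φ₁, φ₂}, ψ f = f} =
      ↑(Algebra.adjoin k ({y18_1 a b, y18_2, y18_3} : Set (MvPolynomial (Fin 3) k))) ∧
    br18 (y18_1 a b) y18_2 = y18_3 ∧
    br18 (y18_2 : MvPolynomial (Fin 3) k) y18_3 = 0 ∧
    br18 y18_3 (y18_1 a b) = -6 * y18_2 ^ 2 :=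
  stmt_18_general a b φ₁ φ₂ hφ₁0 hφ₁1 hφ₁2 hφ₂0 hφ₂1 hφ₂2
end
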